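/- arXiv:2308.04859 — 5 statements merged into one kernel-verified Lean document; each statement's English description precedes it below -/
import Mathlib

section
/- Let $w$ be a nonnegative integrable weight on a measurable subset $\Omega \subset \mathbb{D}$ of positive area with $w$ not almost everywhere zero, let $\mathcal{D}$ be a dyadic grid, and let $1 < p < \infty$. If there exists a constant $C$ such that $w(\{z \in \Omega : M_{\mathcal{D},\Omega} f(z) > \lambda\}) \le C \lambda^{-p}\|f\|_{L^p(\Omega,w)}^p$ for all $\lambda > 0$ and $f \in L^p(\Omega,w)$, then $w$ is positive almost everywhere on $\Omega$ and $[w]_{B_{p,\mathcal{D},\Omega}} \le C$, i.e., $w$ is a restricted dyadic Békollé–Bonami weight. -/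
open MeasureTheory ENNReal

noncomputable section

/-- The open unit disc in `ℂ`. -/
def unitDisc : Set ℂ := {z | ‖z‖ < 1}

/-- Normalized area measure on `ℂ` (so that the unit disc has measure 1). -/
def areaM : Measure ℂ := (ENNReal.ofReal Real.pi)⁻¹ • (volume : Measure ℂ)

/-- The point `e^{2πit}` of the unit circle (arc length normalized to 1). -/
def circlePoint (t : ℝ) : ℂ := Complex.exp (2 * Real.pi * t * Complex.I)

/-- An arc of the circle, given by its starting angle and its (normalized) length. -/
structure Arc where
  start : ℝ
  len : ℝ

/-- Membership of a point of the circle in an arc. -/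
def arcMem (I : Arc) (w : ℂ) : Prop :=
  ∃ t : ℝ, I.start ≤ t ∧ t < I.start + I.len ∧ w = circlePoint t

/-- The Carleson square of an arc. -/
def carleson (I : Arc) : Set ℂ :=
  {z | z ≠ 0 ∧ ‖z‖ < 1 ∧ 1 - ‖z‖ < I.len ∧ arcMem I (z / (‖z‖ : ℂ))}

/-- A dyadic grid on the circle: contains the whole circle, arcs of equal length partition
the circle, and every arc is the union of two arcs of half its length. -/
structure DyadicGrid where
  arcs : Set Arc
  len_pos : ∀ I ∈ arcs, 0 < I.len
  whole : ∃ I ∈ arcs, I.len = 1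
  partition : ∀ I ∈ arcs, ∀ t : ℝ,
    ∃! J : Arc, J ∈ arcs ∧ J.len = I.len ∧ arcMem J (circlePoint t)
  halves : ∀ I ∈ arcs, ∃ I₁ ∈ arcs, ∃ I₂ ∈ arcs,
    I₁.len = I.len / 2 ∧ I₂.len = I.len / 2 ∧
    ∀ w : ℂ, arcMem I w ↔ (arcMem I₁ w ∨ arcMem I₂ w)

/-- Average of `g` over `S(I) ∩ Ω`, normalized by the full area of `S(I)`. -/
def avgOn (Ω : Set ℂ) (I : Arc) (g : ℂ → ℝ≥0∞) : ℝ≥0∞ :=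
  (areaM (carleson I))⁻¹ * ∫⁻ z in carleson I ∩ Ω, g z ∂areaM

/-- The restricted dyadic maximal operator `M_{𝒟,Ω}`. -/
def maxOp (D : DyadicGrid) (Ω : Set ℂ) (f : ℂ → ℝ≥0∞) (z : ℂ) : ℝ≥0∞ :=
  ⨆ (I : Arc) (_ : I ∈ D.arcs ∧ z ∈ carleson I ∩ Ω), avgOn Ω I f

/-- The restricted dyadic Békollé–Bonami constant `[w]_{B_{p,𝒟,Ω}}`. -/
def bpConst (D : DyadicGrid) (Ω : Set ℂ) (p : ℝ) (w : ℂ → ℝ≥0∞) : ℝ≥0∞ :=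
  ⨆ (I : Arc) (_ : I ∈ D.arcs),
    avgOn Ω I w * (avgOn Ω I fun z => w z ^ (-(1 : ℝ) / (p - 1))) ^ (p - 1)

/-- The `ρ`-top half `T_ρ(I)` of the Carleson square of an arc `I`. -/
def topHalfρ (ρ : ℝ) (I : Arc) : Set ℂ :=
  {z | z ≠ 0 ∧ 1 - ρ < (1 - ‖z‖) / I.len ∧ (1 - ‖z‖) / I.len ≤ 1 ∧ arcMem I (z / (‖z‖ : ℂ))}

end


section AuxLemmas

open MeasureTheory ENNReal

theorem aux_rpow_iSup {ι : Sort*} (f : ι → ℝ≥0∞) {q : ℝ} (hq : 0 < q) :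
    (⨆ i, f i) ^ q = ⨆ i, f i ^ q := by
  apply le_antisymm
  · have h1 : (⨆ i, f i) ≤ (⨆ i, f i ^ q) ^ q⁻¹ := by
      apply iSup_le fun i => ?_
      have h2 : f i = (f i ^ q) ^ q⁻¹ := by
        rw [← ENNReal.rpow_mul, mul_inv_cancel₀ hq.ne', ENNReal.rpow_one]
      rw [h2]
      exact ENNReal.rpow_le_rpow (le_iSup (fun i => f i ^ q) i) (by positivity)
    calc (⨆ i, f i) ^ q ≤ ((⨆ i, f i ^ q) ^ q⁻¹) ^ q := ENNReal.rpow_le_rpow h1 hq.le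
    _ = ⨆ i, f i ^ q := by rw [← ENNReal.rpow_mul, inv_mul_cancel₀ hq.ne', ENNReal.rpow_one]
  · exact iSup_le fun i => ENNReal.rpow_le_rpow (le_iSup f i) hq.le

theorem aux_sSup_Iio (a : ℝ≥0∞) : sSup (Set.Iio a) = a := by
  rcases eq_or_ne a 0 with rfl | ha
  · rw [show Set.Iio (0:ℝ≥0∞) = ∅ from
      Set.eq_empty_iff_forall_notMem.2 fun x hx => (not_lt_of_ge (zero_le : (0:ℝ≥0∞) ≤ x)) hx, sSup_empty]
    rfl
  · apply le_antisymm (sSup_le fun b hb => hb.le)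
    refine le_of_forall_lt fun c hc => ?_
    obtain ⟨d, hcd, hda⟩ := exists_between hc
    exact lt_of_lt_of_le hcd (le_sSup hda)

theorem aux_mul_rpow_le {W Y a : ℝ≥0∞} {q : ℝ} (hq : 0 < q)
    (H : ∀ b, b < a → W * b ^ q ≤ Y) : W * a ^ q ≤ Y := by
  have h1 : a = ⨆ b : Set.Iio a, (b : ℝ≥0∞) := by
    rw [← sSup_eq_iSup', aux_sSup_Iio]
  rw [h1, aux_rpow_iSup _ hq, ENNReal.mul_iSup]
  exact iSup_le fun b => H b b.2

theorem aux_iSup_min (a : ℝ≥0∞) : ⨆ n : ℕ, min a n = a := by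
  apply le_antisymm (iSup_le fun n => min_le_left _ _)
  rcases eq_or_ne a ⊤ with rfl | ha
  · have h : ∀ n : ℕ, min (⊤:ℝ≥0∞) n = n := fun n => min_eq_right le_top
    simp only [h, ENNReal.iSup_natCast, le_refl]
  · obtain ⟨n, hn⟩ := ENNReal.exists_nat_gt ha
    calc a = min a n := (min_eq_left hn.le).symm
    _ ≤ _ := le_iSup (fun n : ℕ => min a n) n

theorem continuous_circlePoint : Continuous circlePoint := by
  unfold circlePoint
  fun_prop

theorem arcSet_eq (I : Arc) :
    {u : ℂ | arcMem I u} = circlePoint '' Set.Ico I.start (I.start + I.len) := by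
  ext u
  simp only [Set.mem_setOf_eq, arcMem, Set.mem_image, Set.mem_Ico]
  exact ⟨fun ⟨t, h1, h2, h3⟩ => ⟨t, ⟨h1, h2⟩, h3.symm⟩,
    fun ⟨t, ⟨h1, h2⟩, h3⟩ => ⟨t, h1, h2, h3.symm⟩⟩

theorem measurableSet_arcSet (I : Arc) : MeasurableSet {u : ℂ | arcMem I u} := by
  rw [arcSet_eq]
  rcases le_or_gt I.len 0 with hl | hl
  · rw [Set.Ico_eq_empty (by linarith), Set.image_empty]; exact MeasurableSet.empty
  · have h1 : Set.Ico I.start (I.start + I.len) =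
        ⋃ n : ℕ, Set.Icc I.start (I.start + I.len - I.len / (n + 1)) := by
      ext t
      simp only [Set.mem_Ico, Set.mem_iUnion, Set.mem_Icc]
      constructor
      · rintro ⟨h1, h2⟩
        obtain ⟨n, hn⟩ := exists_nat_gt (I.len / (I.start + I.len - t))
        refine ⟨n, h1, ?_⟩
        have hpos : 0 < I.start + I.len - t := by linarith
        rw [div_lt_iff₀ hpos] at hn
        have hn1 : I.len < (n + 1) * (I.start + I.len - t) := by nlinarith [hpos]
        have h3 : I.len / (n + 1) < I.start + I.len - t := by
          rw [div_lt_iff₀ (by positivity)]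
          linarith [hn1]
        linarith
      · rintro ⟨n, h1, h2⟩
        have h3 : 0 < I.len / (n + 1) := by positivity
        exact ⟨h1, by linarith⟩
    rw [h1, Set.image_iUnion]
    exact MeasurableSet.iUnion fun n =>
      ((isCompact_Icc.image continuous_circlePoint).isClosed).measurableSet

theorem measurableSet_carleson (I : Arc) : MeasurableSet (carleson I) := by
  have h1 : carleson I = {z : ℂ | z ≠ 0} ∩ ({z : ℂ | ‖z‖ < 1} ∩ ({z : ℂ | 1 - ‖z‖ < I.len} ∩
      (fun z : ℂ => ((‖z‖⁻¹ : ℝ) : ℂ) * z) ⁻¹' {u : ℂ | arcMem I u})) := by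
    ext z
    simp only [carleson, Set.mem_setOf_eq, Set.mem_inter_iff, Set.mem_preimage]
    constructor
    · rintro ⟨h0, h2, h3, h4⟩
      refine ⟨h0, h2, h3, ?_⟩
      rwa [show ((‖z‖⁻¹ : ℝ) : ℂ) * z = z / (‖z‖ : ℂ) by
        rw [div_eq_mul_inv, Complex.ofReal_inv, mul_comm]]
    · rintro ⟨h0, h2, h3, h4⟩
      refine ⟨h0, h2, h3, ?_⟩
      rwa [show ((‖z‖⁻¹ : ℝ) : ℂ) * z = z / (‖z‖ : ℂ) by
        rw [div_eq_mul_inv, Complex.ofReal_inv, mul_comm]] at h4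
  rw [h1]
  refine (MeasurableSet.singleton (0:ℂ)).compl.inter ?_
  refine ((isOpen_lt continuous_norm continuous_const).measurableSet).inter ?_
  refine ((isOpen_lt (by continuity) continuous_const).measurableSet).inter ?_
  exact ((Complex.measurable_ofReal.comp measurable_norm.inv).mul measurable_id)
    (measurableSet_arcSet I)

theorem circlePoint_add_int (x : ℝ) (k : ℤ) : circlePoint (x + k) = circlePoint x := by
  unfold circlePoint
  rw [show (2 * (Real.pi:ℂ) * ((x:ℝ) + (k:ℤ) : ℝ) * Complex.I)
      = 2 * Real.pi * (x:ℝ) * Complex.I + (k:ℤ) * (2 * Real.pi * Complex.I) by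
    push_cast; ring]
  rw [Complex.exp_add, Complex.exp_int_mul_two_pi_mul_I, mul_one]

theorem arcMem_of_unit (s : ℝ) {u : ℂ} (hu : ‖u‖ = 1) :
    ∃ t : ℝ, s ≤ t ∧ t < s + 1 ∧ u = circlePoint t := by
  have habs : ‖u‖ = 1 := hu
  have hexp : Complex.exp (u.arg * Complex.I) = u := by
    have h := Complex.norm_mul_exp_arg_mul_I u
    rwa [habs, Complex.ofReal_one, one_mul] at h
  set x := u.arg / (2 * Real.pi) with hx
  have hcx : circlePoint x = u := by
    unfold circlePoint
    rw [show (2 * (Real.pi:ℂ) * (x:ℝ) * Complex.I) = u.arg * Complex.I by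
      rw [hx]; push_cast
      have hpi : ((Real.pi : ℂ)) ≠ 0 := Complex.ofReal_ne_zero.2 Real.pi_ne_zero
      field_simp]
    exact hexp
  refine ⟨x + ⌈s - x⌉, ?_, ?_, ?_⟩
  · have h := Int.le_ceil (s - x); linarith
  · have h := Int.ceil_lt_add_one (s - x); linarith
  · rw [circlePoint_add_int, hcx]

theorem mem_carleson_whole {I : Arc} (hlen : I.len = 1) {z : ℂ} (hz : z ≠ 0) (hz1 : ‖z‖ < 1) :
    z ∈ carleson I := by
  refine ⟨hz, hz1, by rw [hlen]; have := norm_pos_iff.mpr hz; linarith, ?_⟩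
  have hnz : ‖z‖ ≠ 0 := norm_ne_zero_iff.2 hz
  have hu : ‖z / (‖z‖ : ℂ)‖ = 1 := by
    rw [norm_div, Complex.norm_real, Real.norm_eq_abs, abs_of_nonneg (norm_nonneg z),
      div_self hnz]
  obtain ⟨t, h1, h2, h3⟩ := arcMem_of_unit I.start hu
  exact ⟨t, h1, by rw [hlen]; exact h2, h3⟩

theorem carleson_subset_disc (I : Arc) : carleson I ⊆ unitDisc := fun _ hz => hz.2.1

theorem areaM_disc_lt_top : areaM unitDisc < ⊤ := by
  have h1 : unitDisc = Metric.ball (0:ℂ) 1 := by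
    ext z; simp [unitDisc, Metric.mem_ball, dist_zero_right]
  rw [h1, areaM, Measure.smul_apply, smul_eq_mul]
  exact ENNReal.mul_lt_top
    (ENNReal.inv_lt_top.2 (ENNReal.ofReal_pos.2 Real.pi_pos)) measure_ball_lt_top

theorem aux_algebra {Q W F C : ℝ≥0∞} {p : ℝ} (hp : 1 < p) (hQ0 : Q ≠ 0) (hQt : Q ≠ ⊤)
    (hF0 : F ≠ 0) (hFt : F ≠ ⊤) (hle : W * (Q⁻¹ * F) ^ p ≤ C * F) :
    Q⁻¹ * W * (Q⁻¹ * F) ^ (p - 1) ≤ C := by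
  set a := Q⁻¹ * F with ha
  have ha0 : a ≠ 0 := mul_ne_zero_iff.2 ⟨ENNReal.inv_ne_zero.2 hQt, hF0⟩
  have hat : a ≠ ⊤ := ENNReal.mul_ne_top (ENNReal.inv_ne_top.2 hQ0) hFt
  have hsplit : a ^ p = a ^ (p - 1) * a := by
    calc a ^ p = a ^ ((p - 1) + 1) := by congr 1; ring
    _ = a ^ (p - 1) * a ^ (1:ℝ) := ENNReal.rpow_add _ _ ha0 hat
    _ = a ^ (p - 1) * a := by rw [ENNReal.rpow_one]
  have hFF : F * F⁻¹ = 1 := ENNReal.mul_inv_cancel hF0 hFt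
  have lhs_eq : W * a ^ (p - 1) * a * F⁻¹ = Q⁻¹ * W * a ^ (p - 1) := by
    have h : W * a ^ (p - 1) * a * F⁻¹ = Q⁻¹ * W * a ^ (p - 1) * (F * F⁻¹) := by
      rw [ha]; ring
    rw [h, hFF, mul_one]
  calc Q⁻¹ * W * a ^ (p - 1) = W * a ^ (p - 1) * a * F⁻¹ := lhs_eq.symm
  _ ≤ C * F * F⁻¹ := mul_le_mul_left (by rw [mul_assoc, ← hsplit]; exact hle) _
  _ = C := by rw [mul_assoc, hFF, mul_one]

end AuxLemmas


/-- if the restricted dyadic maximal operator is of weak type `(p,p)` with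
respect to `w`, then `w > 0` a.e. on `Ω` and `w` is a restricted dyadic Békollé–Bonami
weight with `[w]_{B_{p,𝒟,Ω}} ≤ C`. -/
theorem stmt_1 (D : DyadicGrid) (Ω : Set ℂ) (hΩmeas : MeasurableSet Ω)
    (hΩsub : Ω ⊆ unitDisc) (hΩpos : 0 < areaM Ω)
    (w : ℂ → ℝ≥0∞) (hwmeas : Measurable w)
    (hwint : ∫⁻ z in Ω, w z ∂areaM < ⊤)
    (hwne : ¬ (∀ᵐ z ∂areaM.restrict Ω, w z = 0))
    (p : ℝ) (hp : 1 < p) (C : ℝ≥0∞)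
    (hweak : ∀ f : ℂ → ℝ≥0∞, Measurable f →
      (∫⁻ z in Ω, f z ^ p * w z ∂areaM < ⊤) →
      ∀ lam : ℝ≥0∞, 0 < lam →
        ∫⁻ z in {z ∈ Ω | lam < maxOp D Ω f z}, w z ∂areaM ≤
          C / lam ^ p * ∫⁻ z in Ω, f z ^ p * w z ∂areaM) :
    (∀ᵐ z ∂areaM.restrict Ω, 0 < w z) ∧ bpConst D Ω p w ≤ C := by
  have hp0 : (0:ℝ) < p := by linarith
  have hp1 : (0:ℝ) < p - 1 := by linarith
  have h0null : areaM ({(0:ℂ)} : Set ℂ) = 0 := by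
    rw [areaM, Measure.smul_apply, smul_eq_mul, measure_singleton, mul_zero]
  have hIw : ∫⁻ z in Ω, w z ∂areaM ≠ 0 := by
    rw [Ne, lintegral_eq_zero_iff hwmeas]
    exact hwne
  have hσmeas : Measurable fun z => w z ^ (-(1:ℝ) / (p - 1)) :=
    ENNReal.continuous_rpow_const.measurable.comp hwmeas
  -- Part 1 : positivity a.e.
  obtain ⟨I₀, hI₀arcs, hI₀len⟩ := D.whole
  have hsub0 : Ω \ {0} ⊆ carleson I₀ ∩ Ω := fun z hz =>
    ⟨mem_carleson_whole hI₀len (fun h => hz.2 (by simp [h])) (hΩsub hz.1), hz.1⟩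
  have hΩdiff : areaM (Ω \ {0}) = areaM Ω := measure_diff_null h0null
  have hrestr : areaM.restrict (Ω \ {0}) = areaM.restrict Ω :=
    Measure.restrict_congr_set (diff_ae_eq_self.2 (measure_mono_null Set.inter_subset_right h0null))
  have part1 : ∀ᵐ z ∂areaM.restrict Ω, 0 < w z := by
    set E := {z | w z = 0} ∩ Ω with hE
    have hEmeas : MeasurableSet E := (hwmeas (measurableSet_singleton 0)).inter hΩmeas
    have hAE : areaM E = 0 := by
      by_contra hAE
      set f : ℂ → ℝ≥0∞ := E.indicator (fun _ => 1) with hfdef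
      have hfmeas : Measurable f := measurable_const.indicator hEmeas
      have hzero : ∀ z, f z ^ p * w z = 0 := by
        intro z
        by_cases hzE : z ∈ E
        · rw [hfdef, Set.indicator_of_mem hzE, ENNReal.one_rpow, one_mul]
          exact hzE.1
        · rw [hfdef, Set.indicator_of_notMem hzE, ENNReal.zero_rpow_of_pos hp0, zero_mul]
      have hint0 : ∫⁻ z in Ω, f z ^ p * w z ∂areaM = 0 := by
        simp only [hzero]; exact lintegral_zero
      set Q := areaM (carleson I₀) with hQ
      have hQfin : Q ≠ ⊤ :=
        (lt_of_le_of_lt (measure_mono (carleson_subset_disc I₀)) areaM_disc_lt_top).ne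
      have hQpos : Q ≠ 0 := by
        intro h
        have h2 : areaM (Ω \ {0}) ≤ Q := measure_mono fun z hz => (hsub0 hz).1
        rw [h, hΩdiff] at h2
        exact hΩpos.ne' (le_antisymm h2 zero_le)
      have hEd : areaM (E \ {0}) = areaM E := measure_diff_null h0null
      have hF1 : areaM E ≤ ∫⁻ z in carleson I₀ ∩ Ω, f z ∂areaM := by
        calc areaM E = areaM (E \ {0}) := hEd.symm
        _ = ∫⁻ z in E \ {0}, f z ∂areaM := by
            rw [setLIntegral_congr_fun (hEmeas.diff (measurableSet_singleton 0))
              (fun z hz => (Set.indicator_of_mem hz.1 _)),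
              setLIntegral_one]
        _ ≤ _ := lintegral_mono_set fun z hz => hsub0 ⟨hz.1.2, hz.2⟩
      have hF2 : ∫⁻ z in carleson I₀ ∩ Ω, f z ∂areaM ≠ ⊤ := by
        have h1 : ∫⁻ z in carleson I₀ ∩ Ω, f z ∂areaM ≤ areaM (carleson I₀ ∩ Ω) := by
          calc ∫⁻ z in carleson I₀ ∩ Ω, f z ∂areaM ≤ ∫⁻ _ in carleson I₀ ∩ Ω, 1 ∂areaM :=
              lintegral_mono fun z => Set.indicator_le (fun _ _ => le_rfl) z
          _ = areaM (carleson I₀ ∩ Ω) := setLIntegral_one _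
        exact (lt_of_le_of_lt h1 (lt_of_le_of_lt
          (measure_mono Set.inter_subset_left) hQfin.lt_top)).ne
      set a := avgOn Ω I₀ f with ha
      have ha0 : a ≠ 0 := mul_ne_zero_iff.2 ⟨ENNReal.inv_ne_zero.2 hQfin,
        fun h => hAE (le_antisymm (h ▸ hF1) zero_le)⟩
      have hat : a ≠ ⊤ := ENNReal.mul_ne_top (ENNReal.inv_ne_top.2 hQpos) hF2
      set lam := a / 2 with hlam
      have hlam0 : 0 < lam := ENNReal.half_pos ha0
      have hlamlt : lam < a := ENNReal.half_lt_self ha0 hat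
      have hb := hweak f hfmeas (by rw [hint0]; exact ENNReal.zero_lt_top) lam hlam0
      rw [hint0, mul_zero] at hb
      have hsubset : Ω \ {0} ⊆ {z ∈ Ω | lam < maxOp D Ω f z} := by
        intro z hz
        refine ⟨hz.1, lt_of_lt_of_le hlamlt ?_⟩
        exact le_iSup₂ (f := fun I' (_ : I' ∈ D.arcs ∧ z ∈ carleson I' ∩ Ω) => avgOn Ω I' f)
          I₀ ⟨hI₀arcs, hsub0 hz⟩
      have hles : ∫⁻ z in Ω, w z ∂areaM ≤ 0 := by
        calc ∫⁻ z in Ω, w z ∂areaM = ∫⁻ z in Ω \ {0}, w z ∂areaM := by rw [hrestr]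
        _ ≤ ∫⁻ z in {z ∈ Ω | lam < maxOp D Ω f z}, w z ∂areaM := lintegral_mono_set hsubset
        _ ≤ 0 := hb
      exact hIw (le_antisymm hles zero_le)
    have hmeas2 : MeasurableSet {z : ℂ | ¬ 0 < w z} := by
      have h : {z : ℂ | ¬ 0 < w z} = w ⁻¹' {0} := by
        ext z; simp [pos_iff_ne_zero]
      rw [h]; exact hwmeas (measurableSet_singleton 0)
    refine ae_iff.2 ?_
    rw [Measure.restrict_apply hmeas2]
    have h : {z : ℂ | ¬ 0 < w z} ∩ Ω = E := by
      ext z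
      simp only [hE, Set.mem_inter_iff, Set.mem_setOf_eq, pos_iff_ne_zero, not_not]
    rw [h, hAE]
  refine ⟨part1, ?_⟩
  -- Part 2 : the Bekolle-Bonami bound
  rw [bpConst]
  refine iSup_le fun I => iSup_le fun hI => ?_
  simp only [avgOn]
  set T := carleson I ∩ Ω with hTdef
  have hTmeas : MeasurableSet T := (measurableSet_carleson I).inter hΩmeas
  have hTsub : T ⊆ Ω := Set.inter_subset_right
  set Q := areaM (carleson I) with hQ
  set W := ∫⁻ z in T, w z ∂areaM with hW
  rcases eq_or_ne Q 0 with hQ0 | hQ0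
  · have hT0 : areaM T = 0 :=
      le_antisymm (hQ0 ▸ measure_mono Set.inter_subset_left) zero_le
    have hW0 : W = 0 := by
      rw [hW, Measure.restrict_eq_zero.2 hT0, lintegral_zero_measure]
    rw [hW0, mul_zero, zero_mul]
    exact zero_le
  have hQfin : Q ≠ ⊤ :=
    (lt_of_le_of_lt (measure_mono (carleson_subset_disc I)) areaM_disc_lt_top).ne
  have hTfin : areaM T ≠ ⊤ :=
    (lt_of_le_of_lt (measure_mono Set.inter_subset_left) hQfin.lt_top).ne
  have key : ∀ n : ℕ,
      Q⁻¹ * W * (Q⁻¹ * ∫⁻ z in T, min (w z ^ (-(1:ℝ) / (p - 1))) n ∂areaM) ^ (p - 1) ≤ C := by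
    intro n
    set F := ∫⁻ z in T, min (w z ^ (-(1:ℝ) / (p - 1))) n ∂areaM with hF
    have hFfin : F ≠ ⊤ := by
      have h1 : F ≤ n * areaM T := by
        calc F ≤ ∫⁻ _ in T, (n:ℝ≥0∞) ∂areaM := lintegral_mono fun z => min_le_right _ _
        _ = n * areaM T := setLIntegral_const T n
      exact (lt_of_le_of_lt h1
        (ENNReal.mul_lt_top (ENNReal.natCast_ne_top n).lt_top hTfin.lt_top)).ne
    rcases eq_or_ne F 0 with hF0 | hF0
    · rw [hF0, mul_zero, ENNReal.zero_rpow_of_pos hp1, mul_zero]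
      exact zero_le
    set f : ℂ → ℝ≥0∞ := T.indicator (fun z => min (w z ^ (-(1:ℝ) / (p - 1))) n) with hfdef
    have hfmeas : Measurable f := (hσmeas.min measurable_const).indicator hTmeas
    have hfT : ∫⁻ z in T, f z ∂areaM = F := by
      rw [hF]
      exact setLIntegral_congr_fun hTmeas
        (fun z hz => Set.indicator_of_mem hz _)
    have hfΩ : ∫⁻ z in Ω, f z ∂areaM = F := by
      rw [hfdef, lintegral_indicator hTmeas, Measure.restrict_restrict hTmeas,
        Set.inter_eq_self_of_subset_left hTsub, ← hF]
    have hptw : ∀ z, f z ^ p * w z ≤ f z := by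
      intro z
      by_cases hzT : z ∈ T
      · rw [hfdef, Set.indicator_of_mem hzT]
        set m := min (w z ^ (-(1:ℝ) / (p - 1))) (n:ℝ≥0∞) with hm
        rcases eq_or_ne m 0 with hm0 | hm0
        · rw [hm0, ENNReal.zero_rpow_of_pos hp0, zero_mul]
        have hmt : m ≠ ⊤ := ne_top_of_le_ne_top (ENNReal.natCast_ne_top n) (min_le_right _ _)
        have hkey : m ^ (p - 1) * w z ≤ 1 := by
          have h1 : m ^ (p - 1) ≤ (w z)⁻¹ := by
            calc m ^ (p - 1) ≤ (w z ^ (-(1:ℝ) / (p - 1))) ^ (p - 1) :=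
                ENNReal.rpow_le_rpow (min_le_left _ _) hp1.le
            _ = (w z)⁻¹ := by
              rw [← ENNReal.rpow_mul,
                show (-(1:ℝ) / (p - 1)) * (p - 1) = -1 by field_simp,
                ENNReal.rpow_neg_one]
          calc m ^ (p - 1) * w z ≤ (w z)⁻¹ * w z := mul_le_mul_left h1 _
          _ ≤ 1 := by
              rcases eq_or_ne (w z) 0 with h | h0
              · simp [h]
              rcases eq_or_ne (w z) ⊤ with h | ht
              · simp [h]
              · rw [ENNReal.inv_mul_cancel h0 ht]
        have hsplit : m ^ p = m ^ (p - 1) * m := by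
          calc m ^ p = m ^ ((p - 1) + 1) := by congr 1; ring
          _ = m ^ (p - 1) * m ^ (1:ℝ) := ENNReal.rpow_add _ _ hm0 hmt
          _ = m ^ (p - 1) * m := by rw [ENNReal.rpow_one]
        calc m ^ p * w z = m ^ (p - 1) * w z * m := by rw [hsplit]; ring
        _ ≤ 1 * m := mul_le_mul_left hkey _
        _ = m := one_mul m
      · rw [hfdef, Set.indicator_of_notMem hzT, ENNReal.zero_rpow_of_pos hp0, zero_mul]
    have hJF : ∫⁻ z in Ω, f z ^ p * w z ∂areaM ≤ F := by
      calc ∫⁻ z in Ω, f z ^ p * w z ∂areaM ≤ ∫⁻ z in Ω, f z ∂areaM :=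
          lintegral_mono fun z => hptw z
      _ = F := hfΩ
    have hint : ∫⁻ z in Ω, f z ^ p * w z ∂areaM < ⊤ := lt_of_le_of_lt hJF hFfin.lt_top
    have hQF : Q⁻¹ * F ≠ ⊤ := ENNReal.mul_ne_top (ENNReal.inv_ne_top.2 hQ0) hFfin
    have hWF : W * (Q⁻¹ * F) ^ p ≤ C * F := by
      apply aux_mul_rpow_le hp0
      intro b hb
      rcases eq_or_ne b 0 with rfl | hb0
      · rw [ENNReal.zero_rpow_of_pos hp0, mul_zero]; exact zero_le
      have hbt : b ≠ ⊤ := (hb.trans (lt_top_iff_ne_top.2 hQF)).ne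
      have hbp0 : b ^ p ≠ 0 := (ENNReal.rpow_pos (pos_iff_ne_zero.2 hb0) hbt).ne'
      have hbpt : b ^ p ≠ ⊤ := ENNReal.rpow_ne_top_of_nonneg hp0.le hbt
      have h1 := hweak f hfmeas hint b (pos_iff_ne_zero.2 hb0)
      have h2 : W ≤ ∫⁻ z in {z ∈ Ω | b < maxOp D Ω f z}, w z ∂areaM := by
        apply lintegral_mono_set
        intro z hz
        refine ⟨hTsub hz, lt_of_lt_of_le hb ?_⟩
        have havg : avgOn Ω I f = Q⁻¹ * F := by rw [avgOn, ← hTdef, hfT, hQ]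
        calc Q⁻¹ * F = avgOn Ω I f := havg.symm
        _ ≤ maxOp D Ω f z :=
          le_iSup₂ (f := fun I' (_ : I' ∈ D.arcs ∧ z ∈ carleson I' ∩ Ω) => avgOn Ω I' f)
            I ⟨hI, hz⟩
      calc W * b ^ p ≤ (C / b ^ p * ∫⁻ z in Ω, f z ^ p * w z ∂areaM) * b ^ p :=
          mul_le_mul_left (h2.trans h1) _
      _ ≤ (C / b ^ p * F) * b ^ p := mul_le_mul_left (mul_le_mul_right hJF _) _
      _ = C * F := by
          rw [div_eq_mul_inv,
            show C * (b ^ p)⁻¹ * F * b ^ p = C * F * ((b ^ p)⁻¹ * b ^ p) by ring,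
            ENNReal.inv_mul_cancel hbp0 hbpt, mul_one]
    exact aux_algebra hp hQ0 hQfin hF0 hFfin hWF
  have hSig : ∫⁻ z in T, w z ^ (-(1:ℝ) / (p - 1)) ∂areaM =
      ⨆ n : ℕ, ∫⁻ z in T, min (w z ^ (-(1:ℝ) / (p - 1))) n ∂areaM := by
    calc ∫⁻ z in T, w z ^ (-(1:ℝ) / (p - 1)) ∂areaM
        = ∫⁻ z in T, ⨆ n : ℕ, min (w z ^ (-(1:ℝ) / (p - 1))) n ∂areaM :=
          lintegral_congr fun z => (aux_iSup_min _).symm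
    _ = ⨆ n : ℕ, ∫⁻ z in T, min (w z ^ (-(1:ℝ) / (p - 1))) n ∂areaM :=
          lintegral_iSup (fun n => hσmeas.min measurable_const)
            (fun n m hnm z => min_le_min le_rfl (Nat.cast_le.2 hnm))
  calc Q⁻¹ * W * (Q⁻¹ * ∫⁻ z in T, w z ^ (-(1:ℝ) / (p - 1)) ∂areaM) ^ (p - 1)
      = ⨆ n : ℕ, Q⁻¹ * W *
          (Q⁻¹ * ∫⁻ z in T, min (w z ^ (-(1:ℝ) / (p - 1))) n ∂areaM) ^ (p - 1) := by
        rw [hSig, ENNReal.mul_iSup, aux_rpow_iSup _ hp1, ENNReal.mul_iSup]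
  _ ≤ C := iSup_le key
end

section
/- Let $f$ be a positive function on $\mathbb{D}$ and $\mathcal{D}$ a dyadic grid. The following are equivalent: (1) there exists $C \ge 1$ such that $f(z) \le C f(\zeta)$ for all $z, \zeta$ lying in a common dyadic $3/4$-top half $T_{3/4}(I)$, $I \in \mathcal{D}$; (2) there exists $L > 0$ such that $|\log f(z) - \log f(\zeta)| \le L(1 + \beta_{\mathcal{D}}(z,\zeta))$ for all $z, \zeta \in \mathbb{D}$. -/
open MeasureTheory ENNReal

/-- `I` is contained in `J` as arcs of the circle. -/
def arcSub (I J : Arc) : Prop := ∀ w : ℂ, arcMem I w → arcMem J w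

/-! ### Auxiliary lemmas -/

lemma circlePoint_eq_iff {a b : ℝ} : circlePoint a = circlePoint b ↔ ∃ n : ℤ, a = b + n := by
  unfold circlePoint
  rw [Complex.exp_eq_exp_iff_exists_int]
  constructor
  · rintro ⟨n, h⟩
    refine ⟨n, ?_⟩
    have h2 : (2 * (Real.pi : ℂ)) * Complex.I ≠ 0 := by
      simp [Complex.I_ne_zero, Real.pi_ne_zero]
    have h3 : ((a : ℂ)) * (2 * (Real.pi:ℂ) * Complex.I)
        = ((b : ℂ) + (n:ℤ)) * (2*(Real.pi:ℂ)*Complex.I) := by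
      linear_combination h
    have := mul_right_cancel₀ h2 h3
    exact_mod_cast this
  · rintro ⟨n, h⟩
    exact ⟨n, by push_cast [h]; ring⟩

lemma norm_circlePoint (t : ℝ) : ‖circlePoint t‖ = 1 := by
  simp [circlePoint, Complex.norm_exp]

lemma arcMem_norm {I : Arc} {w : ℂ} (h : arcMem I w) : ‖w‖ = 1 := by
  obtain ⟨t, _, _, rfl⟩ := h; exact norm_circlePoint t

lemma arcSub_len {J Q : Arc} (hJ : 0 < J.len) (h : arcSub J Q) : min J.len 1 ≤ Q.len := by
  rcases le_or_gt 1 Q.len with hQ | hQ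
  · exact le_trans (min_le_right _ _) hQ
  by_contra hlt
  push_neg at hlt
  have h0 : arcMem Q (circlePoint J.start) := h _ ⟨J.start, le_refl _, by linarith, rfl⟩
  obtain ⟨t0, ht0a, ht0b, ht0e⟩ := h0
  obtain ⟨n, hn⟩ := circlePoint_eq_iff.mp ht0e
  set s : ℝ := Q.start + Q.len - t0 with hs
  have hs0 : 0 < s := by simp [hs]; linarith
  have hsQ : s ≤ Q.len := by simp [hs]; linarith
  have hsJ : s < J.len := lt_of_le_of_lt hsQ (lt_of_lt_of_le hlt (min_le_left _ _))
  have h1 : arcMem Q (circlePoint (J.start + s)) :=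
    h _ ⟨J.start + s, by linarith, by linarith, rfl⟩
  obtain ⟨t1, ht1a, ht1b, ht1e⟩ := h1
  obtain ⟨m, hm⟩ := circlePoint_eq_iff.mp ht1e
  have ht1 : t1 = Q.start + Q.len + (n - m) := by
    have h4 : J.start + s = t1 + m := hm
    push_cast at hn h4 ⊢
    linarith [h4, hn]
  have hmn0 : (0:ℝ) < ((m - n : ℤ) : ℝ) := by push_cast; nlinarith [ht1b, ht1.symm]
  have hmn1 : (m - n : ℤ) ≤ (0:ℤ) := by
    by_contra hc
    push_neg at hc
    have h5 : (1:ℝ) ≤ ((m - n : ℤ) : ℝ) := by exact_mod_cast hc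
    push_cast at h5 ht1
    linarith [ht1a]
  have hz : (0:ℤ) < m - n := by exact_mod_cast hmn0
  omega

lemma arcSub_whole {W : Arc} (hW : W.len = 1) (J : Arc) : arcSub J W := by
  rintro w ⟨t, _, _, rfl⟩
  refine ⟨W.start + Int.fract (t - W.start), by linarith [Int.fract_nonneg (t - W.start)],
    by rw [hW]; linarith [Int.fract_lt_one (t - W.start)], ?_⟩
  exact circlePoint_eq_iff.mpr ⟨⌊t - W.start⌋, by rw [Int.fract]; ring⟩

lemma no_mid (D : DyadicGrid) {I : Arc} (hI : I ∈ D.arcs) (h1 : 1/2 < I.len) (h2 : I.len < 1) :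
    False := by
  obtain ⟨J, ⟨hJarcs, hJlen, hJmem⟩, _⟩ := D.partition I hI (I.start + I.len)
  have hcom : ∃ t : ℝ, arcMem I (circlePoint t) ∧ arcMem J (circlePoint t) := by
    rcases lt_or_ge (Int.fract (J.start - I.start)) I.len with hr | hr
    · refine ⟨I.start + Int.fract (J.start - I.start),
        ⟨I.start + Int.fract (J.start - I.start),
          by linarith [Int.fract_nonneg (J.start - I.start)], by linarith, rfl⟩, ?_⟩
      refine ⟨J.start, le_refl _, by rw [hJlen]; linarith, ?_⟩
      exact (circlePoint_eq_iff.mpr ⟨⌊J.start - I.start⌋, by rw [Int.fract]; ring⟩).symm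
    · have hne : Int.fract (J.start - I.start) ≠ 0 := by intro h0; rw [h0] at hr; linarith
      have hfr : Int.fract (I.start - J.start) = 1 - Int.fract (J.start - I.start) := by
        rw [show I.start - J.start = -(J.start - I.start) by ring, Int.fract_neg hne]
      have hlt1 : Int.fract (J.start - I.start) < 1 := Int.fract_lt_one _
      refine ⟨I.start, ⟨I.start, le_refl _, by linarith, rfl⟩, ?_⟩
      refine ⟨J.start + Int.fract (I.start - J.start),
        by linarith [Int.fract_nonneg (I.start - J.start)],
        by rw [hJlen, hfr]; linarith, ?_⟩
      exact (circlePoint_eq_iff.mpr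
        ⟨-⌊I.start - J.start⌋, by rw [Int.fract]; push_cast; ring⟩).symm
  obtain ⟨t, hti, htj⟩ := hcom
  obtain ⟨K, _, hKuniq⟩ := D.partition I hI t
  have hIJ : I = J := by
    rw [hKuniq I ⟨hI, rfl, hti⟩, hKuniq J ⟨hJarcs, hJlen, htj⟩]
  rw [← hIJ] at hJmem
  obtain ⟨s, hs1, hs2, hs3⟩ := hJmem
  obtain ⟨n, hn⟩ := circlePoint_eq_iff.mp hs3
  have hn0 : (0:ℝ) < (n:ℝ) := by push_cast at hn ⊢; linarith
  have hn1 : ((n:ℤ):ℝ) < 1 := by push_cast at hn ⊢; linarith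
  have h5 : (0:ℤ) < n := by exact_mod_cast hn0
  have h6 : (n:ℤ) < 1 := by exact_mod_cast hn1
  omega

lemma len_le_one (D : DyadicGrid) {I : Arc} (hI : I ∈ D.arcs) (h2 : I.len < 2) : I.len ≤ 1 := by
  by_contra h
  push_neg at h
  obtain ⟨I₁, hI₁, I₂, hI₂, hl₁, hl₂, _⟩ := D.halves I hI
  exact no_mid D hI₁ (by rw [hl₁]; linarith) (by rw [hl₁]; linarith)

lemma mem_topHalf_iff {ρ : ℝ} {I : Arc} (hlen : 0 < I.len) {z : ℂ} :
    z ∈ topHalfρ ρ I ↔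
      z ≠ 0 ∧ (1 - ρ) * I.len < 1 - ‖z‖ ∧ 1 - ‖z‖ ≤ I.len ∧ arcMem I (z / (‖z‖ : ℂ)) := by
  unfold topHalfρ
  rw [Set.mem_setOf_eq, lt_div_iff₀ hlen, div_le_one hlen]

lemma pt_spec {θ : ℂ} (hθ : ‖θ‖ = 1) {d : ℝ} (hd1 : d < 1) :
    ((1 - d : ℝ) : ℂ) * θ ≠ 0 ∧ ‖((1 - d : ℝ) : ℂ) * θ‖ = 1 - d ∧
      (((1 - d : ℝ) : ℂ) * θ) / ((‖((1 - d : ℝ) : ℂ) * θ‖ : ℝ) : ℂ) = θ := by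
  have hn : ‖((1 - d : ℝ) : ℂ) * θ‖ = 1 - d := by
    rw [norm_mul, hθ, Complex.norm_real, Real.norm_eq_abs, abs_of_pos (by linarith), mul_one]
  have hne : ((1 - d : ℝ) : ℂ) ≠ 0 := by
    simp only [ne_eq, Complex.ofReal_eq_zero]; intro h; linarith [h]
  refine ⟨mul_ne_zero hne (by intro h; rw [h, norm_zero] at hθ; linarith), hn, ?_⟩
  rw [hn, mul_comm, mul_div_assoc, div_self hne, mul_one]

lemma mem34_point {B : Arc} (hB : 0 < B.len) {z : ℂ} (hz0 : z ≠ 0)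
    (hmem : arcMem B (z / (‖z‖ : ℂ))) (h1 : B.len / 4 < 1 - ‖z‖) (h2 : 1 - ‖z‖ ≤ B.len) :
    z ∈ topHalfρ (3/4) B :=
  (mem_topHalf_iff hB).mpr
    ⟨hz0, by rw [show (1:ℝ) - 3/4 = 1/4 by norm_num]; linarith, h2, hmem⟩

lemma mem34_anchor {B : Arc} (hB : 0 < B.len) {θ : ℂ} (hθ : ‖θ‖ = 1) (hmem : arcMem B θ)
    {d : ℝ} (hd1 : d < 1) (h1 : B.len / 4 < d) (h2 : d ≤ B.len) :
    (((1 - d : ℝ) : ℂ) * θ) ∈ topHalfρ (3/4) B := by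
  obtain ⟨hne, hn, hdiv⟩ := pt_spec hθ hd1
  exact (mem_topHalf_iff hB).mpr
    ⟨hne, by rw [hn, show (1:ℝ) - 3/4 = 1/4 by norm_num]; linarith,
      by rw [hn]; linarith, by rw [hdiv]; exact hmem⟩

section ChainLemmas

variable (D : DyadicGrid) (f : ℂ → ℝ) (hf : ∀ z, 0 < f z) {C : ℝ} (hC1 : 1 ≤ C)
  (hC : ∀ I ∈ D.arcs, ∀ z ∈ topHalfρ (3/4) I, ∀ ζ ∈ topHalfρ (3/4) I, f z ≤ C * f ζ)

include hf hC1 hC in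
lemma log_step {I : Arc} (hI : I ∈ D.arcs) {z ζ : ℂ}
    (hz : z ∈ topHalfρ (3/4) I) (hζ : ζ ∈ topHalfρ (3/4) I) :
    |Real.log (f z) - Real.log (f ζ)| ≤ Real.log C := by
  have hC0 : (0:ℝ) < C := lt_of_lt_of_le one_pos hC1
  rw [abs_sub_le_iff]
  constructor
  · have h := hC I hI z hz ζ hζ
    have := Real.log_le_log (hf z) h
    rw [Real.log_mul (ne_of_gt hC0) (ne_of_gt (hf ζ))] at this
    linarith
  · have h := hC I hI ζ hζ z hz
    have := Real.log_le_log (hf ζ) h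
    rw [Real.log_mul (ne_of_gt hC0) (ne_of_gt (hf z))] at this
    linarith

include hf hC1 hC in
lemma chain : ∀ k : ℕ, ∀ A : Arc, A ∈ D.arcs → A.len ≤ 1 → ∀ θ : ℂ, arcMem A θ →
    ∀ z : ℂ, z ≠ 0 → z / (‖z‖ : ℂ) = θ → A.len / 2 ^ (k + 2) < 1 - ‖z‖ → 1 - ‖z‖ ≤ A.len →
    |Real.log (f z) - Real.log (f (((1 - 3 * A.len / 8 : ℝ) : ℂ) * θ))| ≤
      (k + 1 : ℝ) * Real.log C := by
  intro k
  induction k with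
  | zero =>
    intro A hA hA1 θ hmθ z hz0 hθz hlow hhigh
    have hApos := D.len_pos A hA
    have hθ1 : ‖θ‖ = 1 := arcMem_norm hmθ
    have hzT : z ∈ topHalfρ (3/4) A :=
      mem34_point hApos hz0 (by rw [hθz]; exact hmθ) (by nlinarith [hlow]) hhigh
    have hpT : (((1 - 3 * A.len / 8 : ℝ) : ℂ) * θ) ∈ topHalfρ (3/4) A := by
      have := mem34_anchor hApos hθ1 hmθ (d := 3 * A.len / 8)
        (by linarith) (by linarith) (by linarith)
      convert this using 3
    have := log_step D f hf hC1 hC hA hzT hpT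
    linarith
  | succ k IH =>
    intro A hA hA1 θ hmθ z hz0 hθz hlow hhigh
    have hApos := D.len_pos A hA
    have hθ1 : ‖θ‖ = 1 := arcMem_norm hmθ
    have hlogC : 0 ≤ Real.log C := Real.log_nonneg hC1
    by_cases hcase : A.len / 4 < 1 - ‖z‖
    · have hzT : z ∈ topHalfρ (3/4) A :=
        mem34_point hApos hz0 (by rw [hθz]; exact hmθ) hcase hhigh
      have hpT : (((1 - 3 * A.len / 8 : ℝ) : ℂ) * θ) ∈ topHalfρ (3/4) A := by
        have := mem34_anchor hApos hθ1 hmθ (d := 3 * A.len / 8)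
          (by linarith) (by linarith) (by linarith)
        convert this using 3
      have := log_step D f hf hC1 hC hA hzT hpT
      push_cast at this ⊢
      nlinarith [Nat.cast_nonneg (α := ℝ) k]
    · push_neg at hcase
      obtain ⟨I₁, hI₁, I₂, hI₂, hl₁, hl₂, hiff⟩ := D.halves A hA
      have hhalf : ∃ A', A' ∈ D.arcs ∧ A'.len = A.len / 2 ∧ arcMem A' θ := by
        rcases (hiff θ).mp hmθ with h | h
        · exact ⟨I₁, hI₁, hl₁, h⟩
        · exact ⟨I₂, hI₂, hl₂, h⟩
      obtain ⟨A', hA', hA'len, hmθ'⟩ := hhalf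
      have hA'pos : 0 < A'.len := D.len_pos A' hA'
      have hstep1 := IH A' hA' (by rw [hA'len]; linarith) θ hmθ' z hz0 hθz
        (by rw [hA'len]
            have h7 : A.len / 2 / 2 ^ (k + 2) = A.len / 2 ^ (k + 1 + 2) := by ring
            rw [h7]; exact hlow)
        (by rw [hA'len]; linarith)
      have hp'T : (((1 - 3 * A'.len / 8 : ℝ) : ℂ) * θ) ∈ topHalfρ (3/4) A' := by
        have := mem34_anchor hA'pos hθ1 hmθ' (d := 3 * A'.len / 8)
          (by nlinarith [hA'len, hA1]) (by linarith) (by linarith)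
        convert this using 3
      have hpT : (((1 - 3 * A.len / 8 : ℝ) : ℂ) * θ) ∈ topHalfρ (3/4) A' := by
        have := mem34_anchor hA'pos hθ1 hmθ' (d := 3 * A.len / 8)
          (by linarith) (by rw [hA'len]; linarith) (by rw [hA'len]; linarith)
        convert this using 3
      have hstep2 := log_step D f hf hC1 hC hA' hp'T hpT
      have htri := abs_sub_le (Real.log (f z))
        (Real.log (f (((1 - 3 * A'.len / 8 : ℝ) : ℂ) * θ)))
        (Real.log (f (((1 - 3 * A.len / 8 : ℝ) : ℂ) * θ)))
      push_cast at hstep1 hstep2 htri ⊢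
      linarith

end ChainLemmas

lemma exp_bound_of_abs_log {a b M M' : ℝ} (ha : 0 < a) (hb : 0 < b)
    (h : |Real.log a - Real.log b| ≤ M) (hMM' : M ≤ M') : a ≤ Real.exp M' * b := by
  have h1 : Real.log a - Real.log b ≤ M := (abs_le.mp h).2
  calc a = Real.exp (Real.log a) := (Real.exp_log ha).symm
    _ ≤ Real.exp (M' + Real.log b) := Real.exp_le_exp.mpr (by linarith)
    _ = Real.exp M' * b := by rw [Real.exp_add, Real.exp_log hb]

set_option maxHeartbeats 2000000 in
/-- a positive function on the disc is almost constant on dyadic `3/4`-top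
halves if and only if its logarithm is quasi-Lipschitz with respect to the dyadic
hyperbolic distance `β_𝒟(z,ζ) = log₂ (|P_𝒟(𝓘_z,𝓘_ζ)| / min{|𝓘_z|,|𝓘_ζ|})`. -/
theorem stmt_5 (D : DyadicGrid) (f : ℂ → ℝ) (hf : ∀ z, 0 < f z) :
    (∃ C : ℝ, 1 ≤ C ∧ ∀ I ∈ D.arcs, ∀ z ∈ topHalfρ (3/4) I, ∀ ζ ∈ topHalfρ (3/4) I,
        f z ≤ C * f ζ) ↔
    (∃ L > (0 : ℝ), ∀ z ζ : ℂ, ∀ Iz Iζ P : Arc,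
        Iz ∈ D.arcs → Iζ ∈ D.arcs → P ∈ D.arcs →
        z ∈ topHalfρ (1/2) Iz → ζ ∈ topHalfρ (1/2) Iζ →
        arcSub Iz P → arcSub Iζ P →
        (∀ Q ∈ D.arcs, arcSub Iz Q → arcSub Iζ Q → P.len ≤ Q.len) →
        |Real.log (f z) - Real.log (f ζ)| ≤
          L * (1 + Real.logb 2 (P.len / min Iz.len Iζ.len))) := by
  constructor
  · -- (1) → (2)
    rintro ⟨C, hC1, hC⟩
    have hlogC : 0 ≤ Real.log C := Real.log_nonneg hC1
    set M : ℝ := max (Real.log C) 1 with hM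
    have hM1 : (1:ℝ) ≤ M := le_max_right _ _
    have hMC : Real.log C ≤ M := le_max_left _ _
    refine ⟨7 * M, by linarith, ?_⟩
    intro z ζ Iz Iζ P hIz hIζ hP hzT hζT hsubz hsubζ hmin
    have hIzpos := D.len_pos Iz hIz
    have hIζpos := D.len_pos Iζ hIζ
    have hPpos := D.len_pos P hP
    obtain ⟨hz0, hz1, hz2, hz3⟩ := (mem_topHalf_iff hIzpos).mp hzT
    obtain ⟨hζ0, hζ1, hζ2, hζ3⟩ := (mem_topHalf_iff hIζpos).mp hζT
    obtain ⟨W, hW, hWlen⟩ := D.whole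
    have hPle1 : P.len ≤ 1 := by
      have := hmin W hW (arcSub_whole hWlen Iz) (arcSub_whole hWlen Iζ)
      rw [hWlen] at this; exact this
    have hznpos : 0 < ‖z‖ := norm_pos_iff.mpr hz0
    have hζnpos : 0 < ‖ζ‖ := norm_pos_iff.mpr hζ0
    have hIzle1 : Iz.len ≤ 1 := len_le_one D hIz (by nlinarith [hz1, hz2])
    have hIζle1 : Iζ.len ≤ 1 := len_le_one D hIζ (by nlinarith [hζ1, hζ2])
    have hIzleP : Iz.len ≤ P.len := by
      have := arcSub_len hIzpos hsubz
      rwa [min_eq_left hIzle1] at this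
    have hIζleP : Iζ.len ≤ P.len := by
      have := arcSub_len hIζpos hsubζ
      rwa [min_eq_left hIζle1] at this
    set m : ℝ := min Iz.len Iζ.len with hm
    have hmpos : 0 < m := lt_min hIzpos hIζpos
    have hmleP : m ≤ P.len := le_trans (min_le_left _ _) hIzleP
    set X : ℝ := Real.logb 2 (P.len / m) with hX
    have hX0 : 0 ≤ X := Real.logb_nonneg one_lt_two ((one_le_div hmpos).mpr hmleP)
    -- bound for one chain
    have key : ∀ (x : ℂ) (Ix : Arc), Ix ∈ D.arcs → x ∈ topHalfρ (1/2) Ix → arcSub Ix P →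
        Ix.len ≤ 1 → Ix.len ≤ P.len → m ≤ Ix.len →
        |Real.log (f x) -
          Real.log (f (((1 - 3 * P.len / 8 : ℝ) : ℂ) * (x / (‖x‖ : ℂ))))| ≤
          (X + 3) * Real.log C := by
      intro x Ix hIx hxT hsub hIxle1 hIxleP hmleIx
      have hIxpos := D.len_pos Ix hIx
      obtain ⟨hx0, hx1, hx2, hx3⟩ := (mem_topHalf_iff hIxpos).mp hxT
      set d : ℝ := 1 - ‖x‖ with hd
      have hd0 : 0 < d := by
        have : (0:ℝ) < (1 - 1/2) * Ix.len := by linarith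
        linarith
      have hdP : d ≤ P.len := le_trans hx2 hIxleP
      have hdhalf : Ix.len / 2 < d := by linarith [hx1]
      set k : ℕ := ⌈Real.logb 2 (P.len / d)⌉₊ with hk
      have hr1 : (1:ℝ) ≤ P.len / d := (one_le_div hd0).mpr hdP
      have hlb0 : 0 ≤ Real.logb 2 (P.len / d) := Real.logb_nonneg one_lt_two hr1
      have h2k : P.len / d ≤ 2 ^ k := by
        have hle := Nat.le_ceil (Real.logb 2 (P.len / d))
        calc P.len / d = (2:ℝ) ^ Real.logb 2 (P.len / d) :=
              (Real.rpow_logb two_pos (by norm_num) (by positivity)).symm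
          _ ≤ (2:ℝ) ^ (k : ℝ) := (Real.rpow_le_rpow_left_iff one_lt_two).mpr hle
          _ = (2:ℝ) ^ k := by rw [Real.rpow_natCast]
      have hlowx : P.len / 2 ^ (k + 2) < d := by
        have h2kpos : (0:ℝ) < 2 ^ k := by positivity
        have hPk : P.len ≤ 2 ^ k * d := by
          rw [div_le_iff₀ hd0] at h2k; linarith
        have he : (2:ℝ) ^ (k + 2) = 2 ^ k * 4 := by ring
        rw [he, div_lt_iff₀ (by positivity)]
        nlinarith
      have hkb : (k:ℝ) ≤ Real.logb 2 (P.len / d) + 1 :=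
        le_of_lt (Nat.ceil_lt_add_one hlb0)
      -- logb 2 (P.len / d) ≤ 1 + X
      have hPd2 : P.len / d ≤ 2 * (P.len / m) := by
        rw [div_le_iff₀ hd0]
        have he : P.len / m * m = P.len := div_mul_cancel₀ _ (ne_of_gt hmpos)
        have hq : 0 ≤ P.len / m := le_of_lt (div_pos hPpos hmpos)
        have hdm : m / 2 < d := by
          have : m ≤ Ix.len := hmleIx
          linarith
        nlinarith [mul_nonneg hq (show (0:ℝ) ≤ 2*d - m by linarith)]
      have hlbX : Real.logb 2 (P.len / d) ≤ 1 + X := by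
        have h1 : Real.logb 2 (P.len / d) ≤ Real.logb 2 (2 * (P.len / m)) :=
          Real.logb_le_logb_of_le one_lt_two (by positivity) hPd2
        have h2 : Real.logb 2 (2 * (P.len / m)) = 1 + X := by
          rw [Real.logb_mul two_ne_zero (ne_of_gt (div_pos hPpos hmpos)),
            Real.logb_self_eq_one one_lt_two]
        linarith
      have hchain := chain D f hf hC1 hC k P hP hPle1 (x / (‖x‖ : ℂ))
        (hsub _ hx3) x hx0 rfl hlowx hdP
      have hcoef : (k:ℝ) + 1 ≤ X + 3 := by linarith
      calc |Real.log (f x) -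
            Real.log (f (((1 - 3 * P.len / 8 : ℝ) : ℂ) * (x / (‖x‖ : ℂ))))| ≤
            ((k:ℝ) + 1) * Real.log C := hchain
        _ ≤ (X + 3) * Real.log C := mul_le_mul_of_nonneg_right hcoef hlogC
    have hbz := key z Iz hIz hzT hsubz hIzle1 hIzleP (min_le_left _ _)
    have hbζ := key ζ Iζ hIζ hζT hsubζ hIζle1 hIζleP (min_le_right _ _)
    -- connect the two anchors
    have hθz : arcMem P (z / (‖z‖ : ℂ)) := hsubz _ hz3
    have hθζ : arcMem P (ζ / (‖ζ‖ : ℂ)) := hsubζ _ hζ3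
    have haz : (((1 - 3 * P.len / 8 : ℝ) : ℂ) * (z / (‖z‖ : ℂ))) ∈ topHalfρ (3/4) P := by
      have := mem34_anchor hPpos (arcMem_norm hθz) hθz (d := 3 * P.len / 8)
        (by linarith) (by linarith) (by linarith)
      convert this using 3
    have haζ : (((1 - 3 * P.len / 8 : ℝ) : ℂ) * (ζ / (‖ζ‖ : ℂ))) ∈ topHalfρ (3/4) P := by
      have := mem34_anchor hPpos (arcMem_norm hθζ) hθζ (d := 3 * P.len / 8)
        (by linarith) (by linarith) (by linarith)
      convert this using 3
    have hmid := log_step D f hf hC1 hC hP haz haζ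
    have htri1 := abs_sub_le (Real.log (f z))
      (Real.log (f (((1 - 3 * P.len / 8 : ℝ) : ℂ) * (z / (‖z‖ : ℂ)))))
      (Real.log (f (((1 - 3 * P.len / 8 : ℝ) : ℂ) * (ζ / (‖ζ‖ : ℂ)))))
    have htri2 := abs_sub_le (Real.log (f z))
      (Real.log (f (((1 - 3 * P.len / 8 : ℝ) : ℂ) * (ζ / (‖ζ‖ : ℂ)))))
      (Real.log (f ζ))
    have hbζ' : |Real.log (f (((1 - 3 * P.len / 8 : ℝ) : ℂ) * (ζ / (‖ζ‖ : ℂ)))) -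
        Real.log (f ζ)| ≤ (X + 3) * Real.log C := by
      rw [abs_sub_comm]; exact hbζ
    have htot : |Real.log (f z) - Real.log (f ζ)| ≤ (2*X + 7) * Real.log C := by
      nlinarith [hbz, hbζ', hmid, htri1, htri2]
    calc |Real.log (f z) - Real.log (f ζ)| ≤ (2*X + 7) * Real.log C := htot
      _ ≤ (2*X + 7) * M := mul_le_mul_of_nonneg_left hMC (by linarith)
      _ ≤ 7 * M * (1 + X) := by nlinarith [mul_nonneg (show (0:ℝ) ≤ M by linarith) hX0]
  · -- (2) → (1)
    rintro ⟨L, hL, h2⟩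
    refine ⟨Real.exp (2*L), Real.one_le_exp (by linarith), ?_⟩
    have key : ∀ I ∈ D.arcs, I.len ≤ 1 → ∀ z ∈ topHalfρ (3/4) I, ∀ ζ ∈ topHalfρ (3/4) I,
        f z ≤ Real.exp (2*L) * f ζ := by
      intro I hI hIle1 z hz ζ hζ
      have hIpos := D.len_pos I hI
      obtain ⟨I₁, hI₁, I₂, hI₂, hl₁, hl₂, hiff⟩ := D.halves I hI
      have pick : ∀ x : ℂ, x ∈ topHalfρ (3/4) I → ∃ A : Arc,
          (A = I ∨ A = I₁ ∨ A = I₂) ∧ A ∈ D.arcs ∧ I.len/2 ≤ A.len ∧ A.len ≤ I.len ∧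
          x ∈ topHalfρ (1/2) A ∧ arcSub A I := by
        intro x hx
        obtain ⟨hx0, hx1, hx2, hx3⟩ := (mem_topHalf_iff hIpos).mp hx
        by_cases hc : I.len/2 < 1 - ‖x‖
        · exact ⟨I, Or.inl rfl, hI, by linarith, le_refl _,
            (mem_topHalf_iff hIpos).mpr ⟨hx0, by linarith [hc], hx2, hx3⟩,
            fun w hw => hw⟩
        · push_neg at hc
          rcases (hiff _).mp hx3 with hm | hm
          · refine ⟨I₁, Or.inr (Or.inl rfl), hI₁, by rw [hl₁], by rw [hl₁]; linarith,
              (mem_topHalf_iff (by rw [hl₁]; linarith : (0:ℝ) < I₁.len)).mpr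
                ⟨hx0, by rw [hl₁]; linarith [hx1], by rw [hl₁]; linarith, hm⟩,
              fun w hw => (hiff w).mpr (Or.inl hw)⟩
          · refine ⟨I₂, Or.inr (Or.inr rfl), hI₂, by rw [hl₂], by rw [hl₂]; linarith,
              (mem_topHalf_iff (by rw [hl₂]; linarith : (0:ℝ) < I₂.len)).mpr
                ⟨hx0, by rw [hl₂]; linarith [hx1], by rw [hl₂]; linarith, hm⟩,
              fun w hw => (hiff w).mpr (Or.inr hw)⟩
      obtain ⟨A, htagA, hAarc, hA1, hA2, hzA, hsubA⟩ := pick z hz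
      obtain ⟨B, htagB, hBarc, hB1, hB2, hζB, hsubB⟩ := pick ζ hζ
      have hApos := D.len_pos A hAarc
      have hBpos := D.len_pos B hBarc
      by_cases hAB : A = B
      · subst hAB
        have hbound := h2 z ζ A A A hAarc hAarc hAarc hzA hζB
          (fun w hw => hw) (fun w hw => hw)
          (fun Q hQ hs _ => by
            have := arcSub_len hApos hs
            rwa [min_eq_left (le_trans hA2 hIle1)] at this)
        have hsimp : A.len / min A.len A.len = 1 := by
          rw [min_self, div_self (ne_of_gt hApos)]
        rw [hsimp, Real.logb_one] at hbound
        exact exp_bound_of_abs_log (hf z) (hf ζ) hbound (by linarith)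
      · have hbound := h2 z ζ A B I hAarc hBarc hI hzA hζB hsubA hsubB ?min
        case min =>
          intro Q hQ hsz hsζ
          have hIQ : arcSub I Q := by
            rcases htagA with h | h | h
            · rw [h] at hsz; exact hsz
            · rcases htagB with h' | h' | h'
              · rw [h'] at hsζ; exact hsζ
              · exact absurd (h.trans h'.symm) hAB
              · intro w hw
                rcases (hiff w).mp hw with hm | hm
                · exact hsz w (by rw [h]; exact hm)
                · exact hsζ w (by rw [h']; exact hm)
            · rcases htagB with h' | h' | h'
              · rw [h'] at hsζ; exact hsζ
              · intro w hw
                rcases (hiff w).mp hw with hm | hm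
                · exact hsζ w (by rw [h']; exact hm)
                · exact hsz w (by rw [h]; exact hm)
              · exact absurd (h.trans h'.symm) hAB
          have := arcSub_len hIpos hIQ
          rwa [min_eq_left hIle1] at this
        have hmin2 : I.len/2 ≤ min A.len B.len := le_min hA1 hB1
        have hminpos : 0 < min A.len B.len := lt_min hApos hBpos
        have hratio : I.len / min A.len B.len ≤ 2 := by
          rw [div_le_iff₀ hminpos]; linarith
        have hlb : Real.logb 2 (I.len / min A.len B.len) ≤ 1 := by
          calc Real.logb 2 (I.len / min A.len B.len) ≤ Real.logb 2 2 :=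
                Real.logb_le_logb_of_le one_lt_two (div_pos hIpos hminpos) hratio
            _ = 1 := Real.logb_self_eq_one one_lt_two
        have hMle : L * (1 + Real.logb 2 (I.len / min A.len B.len)) ≤ 2 * L := by
          nlinarith
        exact exp_bound_of_abs_log (hf z) (hf ζ) hbound
          (by linarith [hMle, hbound] : L * (1 + Real.logb 2 (I.len / min A.len B.len)) ≤ 2*L)
    intro I hI z hz ζ hζ
    by_cases hIlen : I.len ≤ 1
    · exact key I hI hIlen z hz ζ hζ
    · push_neg at hIlen
      have hIpos := D.len_pos I hI
      obtain ⟨W, hW, hWlen⟩ := D.whole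
      have hWpos : (0:ℝ) < W.len := by rw [hWlen]; norm_num
      have trans : ∀ x : ℂ, x ∈ topHalfρ (3/4) I → x ∈ topHalfρ (3/4) W := by
        intro x hx
        obtain ⟨hx0, hx1, hx2, hx3⟩ := (mem_topHalf_iff hIpos).mp hx
        refine (mem_topHalf_iff hWpos).mpr ⟨hx0, ?_, ?_, arcSub_whole hWlen I _ hx3⟩
        · rw [hWlen]; nlinarith [hx1]
        · rw [hWlen]; linarith [norm_nonneg x]
      exact key W hW (le_of_eq hWlen) z (trans z hz) ζ (trans ζ hζ)
end

section
/- There exists a constant $M > 0$ such that for all $z, \zeta \in \mathbb{D}$, $\log \frac{|P(z,\zeta)|}{\min\{|I_z|, |I_\zeta|\}} \le M (1 + \beta(z,\zeta))$, where $\beta$ is the hyperbolic metric on the unit disc. -/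
open MeasureTheory ENNReal Classical

noncomputable section

/-- The translated dyadic grid `𝒟(θ)` of arcs, with normalized lengths `2^{-n}`. -/
def gridArcs (θ : ℝ) : Set Arc :=
  {I | ∃ n k : ℕ, k < 2 ^ n ∧ I = ⟨θ + (k : ℝ) / 2 ^ n, 1 / 2 ^ n⟩}

/-- The arc `𝓘^θ_z` of `𝒟(θ)` whose (dyadic) top half contains `z`. -/
def topArc (θ : ℝ) (z : ℂ) : Arc :=
  if h : ∃ I, I ∈ gridArcs θ ∧ z ∈ topHalfρ (1/2) I then h.choose else ⟨θ, 1⟩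

/-- The smallest arc of `𝒟(θ)` containing both arcs `I` and `J`. -/
def minCover (θ : ℝ) (I J : Arc) : Arc :=
  if h : ∃ P, P ∈ gridArcs θ ∧ arcSub I P ∧ arcSub J P ∧
      ∀ Q ∈ gridArcs θ, arcSub I Q → arcSub J Q → P.len ≤ Q.len
  then h.choose else ⟨θ, 1⟩

/-- The dyadic hyperbolic distance `β_θ` associated with the grid `𝒟(θ)`. -/
def dyadBeta (θ : ℝ) (z ζ : ℂ) : ℝ :=
  Real.logb 2
    ((minCover θ (topArc θ z) (topArc θ ζ)).len / min (topArc θ z).len (topArc θ ζ).len)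

/-- The pseudo-hyperbolic distance on the unit disc. -/
def pseudoHyp (z ζ : ℂ) : ℝ := ‖(ζ - z) / (1 - (starRingEnd ℂ) ζ * z)‖

/-- The hyperbolic metric `β` on the unit disc. -/
def hypDist (z ζ : ℂ) : ℝ :=
  (1 / 2) * Real.log ((1 + pseudoHyp z ζ ^ 2) / (1 - pseudoHyp z ζ ^ 2))

end


lemma normsq_c (w : ℂ) : ‖w‖^2 = w.re^2 + w.im^2 := by
  rw [Complex.sq_norm]
  simp [Complex.normSq_apply]; ring

lemma circlePoint_add_int_s8 (t : ℝ) (m : ℤ) : circlePoint (t + m) = circlePoint t := by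
  unfold circlePoint
  have h : (2 * (Real.pi:ℂ) * ((t:ℂ) + (m:ℂ)) * Complex.I)
      = 2 * (Real.pi:ℂ) * (t:ℂ) * Complex.I + (m:ℤ) * (2 * (Real.pi:ℂ) * Complex.I) := by
    push_cast; ring
  push_cast
  rw [h, Complex.exp_add, Complex.exp_int_mul_two_pi_mul_I, mul_one]

lemma circlePoint_mul (a b : ℝ) : circlePoint a * circlePoint b = circlePoint (a + b) := by
  unfold circlePoint
  rw [← Complex.exp_add]
  push_cast
  ring_nf

lemma conj_circlePoint (t : ℝ) : (starRingEnd ℂ) (circlePoint t) = circlePoint (-t) := by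
  unfold circlePoint
  rw [← Complex.exp_conj]
  congr 1
  have h : (2 * (Real.pi:ℂ) * (t:ℂ) * Complex.I) = ((2*Real.pi*t : ℝ) : ℂ) * Complex.I := by
    push_cast; ring
  rw [h, map_mul, Complex.conj_ofReal, Complex.conj_I]
  push_cast; ring

lemma norm_aux (c s : ℝ) : ‖(c:ℂ) + (s:ℂ)*Complex.I - 1‖^2 = (c-1)^2 + s^2 := by
  rw [normsq_c]
  simp

lemma norm_circlePoint_sub_one (u : ℝ) (hu : |u| ≤ 1/2) :
    4 * |u| ≤ ‖circlePoint u - 1‖ := by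
  have hθ : circlePoint u = Complex.exp ((2 * Real.pi * u : ℝ) * Complex.I) := by
    unfold circlePoint; push_cast; ring_nf
  have hexp : circlePoint u = (Real.cos (2*Real.pi*u) : ℂ) + (Real.sin (2*Real.pi*u) : ℂ) * Complex.I := by
    rw [hθ, Complex.exp_mul_I, Complex.ofReal_cos, Complex.ofReal_sin]
  have hnorm : ‖circlePoint u - 1‖^2 = (Real.cos (2*Real.pi*u) - 1)^2 + (Real.sin (2*Real.pi*u))^2 := by
    rw [hexp, norm_aux]
  have hsq : ‖circlePoint u - 1‖^2 = 4 * (Real.sin (Real.pi * u))^2 := by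
    rw [hnorm]
    have h1 : Real.sin (2*Real.pi*u) ^2 + Real.cos (2*Real.pi*u)^2 = 1 := Real.sin_sq_add_cos_sq _
    have h2 : Real.sin (Real.pi * u) ^ 2 = 1/2 - Real.cos (2*(Real.pi*u))/2 :=
      Real.sin_sq_eq_half_sub _
    have h3 : 2*(Real.pi*u) = 2*Real.pi*u := by ring
    rw [h3] at h2
    nlinarith [h2, h1]
  have hsin : 2 * |u| ≤ |Real.sin (Real.pi * u)| := by
    have h0 : (0:ℝ) ≤ Real.pi * |u| := by positivity
    have hπ : Real.pi > 0 := Real.pi_pos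
    have h1 : Real.pi * |u| ≤ Real.pi / 2 := by nlinarith
    have hms := Real.mul_le_sin h0 h1
    have heq : |Real.sin (Real.pi * u)| = Real.sin (Real.pi * |u|) := by
      rcases abs_cases u with ⟨h, hpos⟩ | ⟨h, hneg⟩
      · rw [h]
        exact abs_of_nonneg (Real.sin_nonneg_of_nonneg_of_le_pi (by positivity) (by nlinarith))
      · have hb := abs_le.mp hu
        have hsn : Real.sin (Real.pi * u) ≤ 0 :=
          Real.sin_nonpos_of_nonpos_of_neg_pi_le (by nlinarith) (by nlinarith)
        rw [h, mul_neg, Real.sin_neg, abs_of_nonpos hsn]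
    rw [heq]
    calc 2 * |u| = 2 / Real.pi * (Real.pi * |u|) := by field_simp
    _ ≤ Real.sin (Real.pi * |u|) := hms
  have hnn : (0:ℝ) ≤ ‖circlePoint u - 1‖ := norm_nonneg _
  nlinarith [sq_abs (Real.sin (Real.pi * u)), hsin, abs_nonneg u, abs_nonneg (Real.sin (Real.pi*u))]

lemma norm_one_sub_ge (w : ℂ) (hw : ‖w‖ ≤ 1) : ‖w - (‖w‖ : ℂ)‖ ≤ ‖1 - w‖ := by
  have h1 : ‖1 - w‖^2 = (1 - w.re)^2 + w.im^2 := by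
    rw [normsq_c]; simp [Complex.sub_re, Complex.sub_im]
  have h2 : ‖w - (‖w‖:ℂ)‖^2 = (w.re - ‖w‖)^2 + w.im^2 := by
    rw [normsq_c]; simp [Complex.sub_re, Complex.sub_im]
  have h3 : w.re ≤ ‖w‖ := Complex.re_le_norm w
  have h4 := normsq_c w
  have hnn1 : (0:ℝ) ≤ ‖1 - w‖ := norm_nonneg _
  have hnn2 : (0:ℝ) ≤ ‖w - (‖w‖:ℂ)‖ := norm_nonneg _
  nlinarith [norm_nonneg w]

lemma disc_identity (z ζ : ℂ) :
    ‖1 - (starRingEnd ℂ) ζ * z‖^2 - ‖ζ - z‖^2 = (1 - ‖z‖^2) * (1 - ‖ζ‖^2) := by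
  rw [normsq_c, normsq_c, normsq_c, normsq_c]
  simp [Complex.sub_re, Complex.sub_im, Complex.mul_re, Complex.mul_im]
  ring

lemma key_scalar (r s d A : ℝ) (hr0 : 0 < r) (hr1 : r < 1) (hs0 : 0 < s) (hs1 : s < 1)
    (hd0 : 0 ≤ d) (hd : d ≤ 1/2) (hA1 : 1 - r*s ≤ A) (hA2 : 4*(r*s)*d ≤ A) :
    ((1-r)+(1-s)+2*d)*(1-r) ≤ 6*A^2 := by
  have hAr : 1 - r ≤ A := by nlinarith
  have hAs : 1 - s ≤ A := by nlinarith
  have hA0 : 0 ≤ A := by linarith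
  rcases le_or_gt r (1/2) with h | h
  · have h12 : (1:ℝ)/2 ≤ A := by linarith
    calc ((1-r)+(1-s)+2*d)*(1-r) ≤ 3*(1-r) := by nlinarith
    _ ≤ 3*A := by linarith
    _ ≤ 6*A^2 := by nlinarith
  · rcases le_or_gt s (1/2) with h' | h'
    · have h12 : (1:ℝ)/2 ≤ A := by linarith
      calc ((1-r)+(1-s)+2*d)*(1-r) ≤ 3*(1-r) := by nlinarith
      _ ≤ 3*A := by linarith
      _ ≤ 6*A^2 := by nlinarith
    · have hdA : d ≤ A := by nlinarith
      nlinarith [mul_nonneg (show (0:ℝ) ≤ A-(1-r) by linarith) (show (0:ℝ) ≤ 1-r by linarith),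
        mul_nonneg (show (0:ℝ) ≤ A-(1-s) by linarith) (show (0:ℝ) ≤ 1-r by linarith),
        mul_nonneg (show (0:ℝ) ≤ A-d by linarith) (show (0:ℝ) ≤ 1-r by linarith),
        mul_nonneg (show (0:ℝ) ≤ A-(1-r) by linarith) hA0]

set_option maxHeartbeats 1000000 in
/-- with `I_z` the arc centered at `z/|z|` of length `1-|z|` and `P(z,ζ)` the
smallest arc containing `I_z` and `I_ζ`, one has
`log (|P(z,ζ)| / min{|I_z|,|I_ζ|}) ≤ M (1 + β(z,ζ))`. -/
theorem stmt_8 :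
    ∃ M > (0 : ℝ), ∀ z ζ : ℂ, z ∈ unitDisc → ζ ∈ unitDisc → z ≠ 0 → ζ ≠ 0 →
      ∀ Iz Iζ P : Arc,
        Iz.len = 1 - ‖z‖ → z / (‖z‖ : ℂ) = circlePoint (Iz.start + Iz.len / 2) →
        Iζ.len = 1 - ‖ζ‖ → ζ / (‖ζ‖ : ℂ) = circlePoint (Iζ.start + Iζ.len / 2) →
        arcSub Iz P → arcSub Iζ P →
        (∀ Q : Arc, arcSub Iz Q → arcSub Iζ Q → P.len ≤ Q.len) →
        Real.log (P.len / min Iz.len Iζ.len) ≤ M * (1 + hypDist z ζ) := by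
  refine ⟨30, by norm_num, ?_⟩
  intro z ζ hzD hζD hz0 hζ0 Iz Iζ P hlz hcz hlζ hcζ hsubz hsubζ hmin
  have hr1 : ‖z‖ < 1 := hzD
  have hs1 : ‖ζ‖ < 1 := hζD
  have hr0 : 0 < ‖z‖ := norm_pos_iff.mpr hz0
  have hs0 : 0 < ‖ζ‖ := norm_pos_iff.mpr hζ0
  set r : ℝ := ‖z‖ with hr
  set s : ℝ := ‖ζ‖ with hs
  set cz : ℝ := Iz.start + Iz.len / 2 with hczdef
  set cζ : ℝ := Iζ.start + Iζ.len / 2 with hcζdef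
  set m : ℤ := round (cz - cζ) with hmdef
  set u : ℝ := (cz - cζ) - m with hudef
  set d : ℝ := |u| with hddef
  have hd0 : 0 ≤ d := abs_nonneg _
  have hdhalf : d ≤ 1/2 := abs_sub_round (cz - cζ)
  have hud : u ≤ d := le_abs_self u
  have hud' : -d ≤ u := neg_abs_le u
  have hlz0 : 0 < Iz.len := by rw [hlz]; linarith
  have hlζ0 : 0 < Iζ.len := by rw [hlζ]; linarith
  -- polar forms
  have hzpolar : z = (r:ℂ) * circlePoint cz := by
    have hne : (r:ℂ) ≠ 0 := Complex.ofReal_ne_zero.mpr hr0.ne'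
    field_simp at hcz
    rw [hcz]
  have hζpolar : ζ = (s:ℂ) * circlePoint cζ := by
    have hne : (s:ℂ) ≠ 0 := Complex.ofReal_ne_zero.mpr hs0.ne'
    field_simp at hcζ
    rw [hcζ]
  -- the covering arc Q
  set Q : Arc := ⟨Iz.start - Iζ.len/2 - d, Iz.len + Iζ.len + 2*d⟩ with hQdef
  have hQz : arcSub Iz Q := by
    rintro w ⟨t, ht1, ht2, hw⟩
    exact ⟨t, by simp only [hQdef]; linarith, by simp only [hQdef]; linarith, hw⟩
  have hQζ : arcSub Iζ Q := by
    rintro w ⟨t, ht1, ht2, hw⟩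
    have hcm : cζ + (m:ℝ) = cz - u := by rw [hudef]; ring
    refine ⟨t + m, ?_, ?_, ?_⟩
    · simp only [hQdef]
      have : Iζ.start + (m:ℝ) = cz - u - Iζ.len/2 := by rw [hcζdef] at hcm; linarith
      have h2 : cz - u - Iζ.len/2 ≥ Iz.start - Iζ.len/2 - d := by
        rw [hczdef]; linarith
      linarith
    · simp only [hQdef]
      have : Iζ.start + Iζ.len + (m:ℝ) = cz - u + Iζ.len/2 := by rw [hcζdef] at hcm; linarith
      have h2 : cz - u + Iζ.len/2 ≤ Iz.start + Iz.len/2 + d + Iζ.len/2 := by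
        rw [hczdef]; linarith
      linarith
    · rw [hw, circlePoint_add_int_s8]
  have hQP : P.len ≤ Iz.len + Iζ.len + 2*d := hmin Q hQz hQζ
  have hPpos : 0 < P.len := by
    obtain ⟨t, h1, h2, -⟩ := hsubz (circlePoint Iz.start) ⟨Iz.start, le_refl _, by linarith, rfl⟩
    linarith
  -- the quantity A
  set w : ℂ := (starRingEnd ℂ) ζ * z with hwdef
  set A : ℝ := ‖1 - w‖ with hAdef
  have hwnorm : ‖w‖ = s * r := by
    rw [hwdef, norm_mul, RCLike.norm_conj]
  have hA1 : 1 - r * s ≤ A := by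
    have := norm_sub_norm_le (1:ℂ) w
    rw [hwnorm, norm_one] at this
    rw [hAdef]; linarith
  have hw_eq : w = ((s*r : ℝ):ℂ) * circlePoint u := by
    have h1 : w = ((s*r : ℝ):ℂ) * (circlePoint (-cζ) * circlePoint cz) := by
      rw [hwdef, hzpolar, hζpolar, map_mul, conj_circlePoint, Complex.conj_ofReal]
      push_cast; ring
    rw [h1, circlePoint_mul]
    have h2 : -cζ + cz = u + m := by rw [hudef]; ring
    rw [h2, circlePoint_add_int_s8]
  have hA2 : 4 * (r*s) * d ≤ A := by
    have hwle : ‖w‖ ≤ 1 := by rw [hwnorm]; nlinarith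
    have h1 : w - ((‖w‖:ℝ):ℂ) = ((s*r:ℝ):ℂ) * (circlePoint u - 1) := by
      rw [hwnorm, hw_eq]; push_cast; ring
    have h2 : ‖w - ((‖w‖:ℝ):ℂ)‖ = (s*r) * ‖circlePoint u - 1‖ := by
      rw [h1, norm_mul, Complex.norm_real, Real.norm_eq_abs, abs_of_nonneg (by positivity)]
    have h3 := norm_circlePoint_sub_one u hdhalf
    have h4 := norm_one_sub_ge w hwle
    have h5 : (s*r) * (4*d) ≤ (s*r) * ‖circlePoint u - 1‖ :=
      mul_le_mul_of_nonneg_left (by rw [hddef]; linarith) (by positivity)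
    rw [hAdef]
    calc 4*(r*s)*d = (s*r)*(4*d) := by ring
    _ ≤ (s*r) * ‖circlePoint u - 1‖ := h5
    _ = ‖w - ((‖w‖:ℝ):ℂ)‖ := h2.symm
    _ ≤ ‖1 - w‖ := h4
  have hApos : 0 < A := by nlinarith
  -- pseudo-hyperbolic quantities
  set ρ : ℝ := pseudoHyp z ζ with hρdef
  have hρ : ρ = ‖ζ - z‖ / A := by
    rw [hρdef, pseudoHyp, norm_div, hAdef, hwdef]
  have hid := disc_identity z ζ
  rw [← hwdef, ← hAdef, ← hr, ← hs] at hid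
  have hρsq : ρ^2 * A^2 = ‖ζ - z‖^2 := by
    rw [hρ, div_pow, div_mul_cancel₀]
    exact pow_ne_zero 2 hApos.ne'
  have hB : (1 - ρ^2) * A^2 = (1-r^2)*(1-s^2) := by linarith [hid, hρsq]
  have hBpos : 0 < (1-r^2)*(1-s^2) :=
    mul_pos (by nlinarith) (by nlinarith)
  have h1mρ : 0 < 1 - ρ^2 := by
    rcases mul_pos_iff.mp (show 0 < (1-ρ^2)*A^2 from hB ▸ hBpos) with ⟨h, -⟩ | ⟨-, h2⟩
    · exact h
    · exact absurd (pow_pos hApos 2) (by linarith)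
  have hρlt : ρ^2 < 1 := by linarith
  have hρ0 : 0 ≤ ρ := by rw [hρdef]; exact norm_nonneg _
  set T : ℝ := (1 + ρ^2) / (1 - ρ^2) with hTdef
  have hT1 : 1 ≤ T := by
    rw [hTdef, le_div_iff₀ h1mρ]; linarith [sq_nonneg ρ]
  have hβ : hypDist z ζ = 1/2 * Real.log T := by
    rw [hypDist, hTdef, hρdef]
  have hβ0 : 0 ≤ Real.log T := Real.log_nonneg hT1
  -- the scalar estimates
  have hks1 := key_scalar r s d A hr0 hr1 hs0 hs1 hd0 hdhalf hA1 hA2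
  have hks2 := key_scalar s r d A hs0 hs1 hr0 hr1 hd0 hdhalf
    (by rw [mul_comm] at hA1; exact hA1) (by rw [mul_comm r s] at hA2; exact hA2)
  -- min
  rw [hlz, hlζ] at hQP ⊢
  set m0 : ℝ := min (1-r) (1-s) with hm0def
  have hm0pos : 0 < m0 := by rw [hm0def]; exact lt_min (by linarith) (by linarith)
  have hstep1 : P.len * ((1-r)*(1-s)) ≤ 6 * A^2 * m0 := by
    rcases le_total (1-r) (1-s) with h | h
    · rw [hm0def, min_eq_left h]
      have e1 : P.len * (1-s) ≤ 6*A^2 := by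
        refine le_trans ?_ hks2
        linarith [mul_nonneg (show (0:ℝ) ≤ (1-s)+(1-r)+2*d - P.len by linarith)
          (show (0:ℝ) ≤ 1-s by linarith)]
      have e2 := mul_le_mul_of_nonneg_right e1 (show (0:ℝ) ≤ 1-r by linarith)
      linarith [e2]
    · rw [hm0def, min_eq_right h]
      have e1 : P.len * (1-r) ≤ 6*A^2 := by
        refine le_trans ?_ hks1
        linarith [mul_nonneg (show (0:ℝ) ≤ (1-r)+(1-s)+2*d - P.len by linarith)
          (show (0:ℝ) ≤ 1-r by linarith)]
      have e2 := mul_le_mul_of_nonneg_right e1 (show (0:ℝ) ≤ 1-s by linarith)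
      linarith [e2]
  have hstep2 : P.len * ((1-r^2)*(1-s^2)) ≤ 24 * A^2 * m0 := by
    have hrs : r * s ≤ 1 := by
      linarith [mul_nonneg (show (0:ℝ) ≤ 1-r by linarith) hs0.le]
    have c0 : (0:ℝ) ≤ 4 - (1+r)*(1+s) := by
      have : (1+r)*(1+s) = 1 + r + s + r*s := by ring
      linarith
    have h4 : (1-r^2)*(1-s^2) ≤ 4*((1-r)*(1-s)) := by
      linarith [mul_nonneg (mul_nonneg (show (0:ℝ) ≤ 1-r by linarith)
        (show (0:ℝ) ≤ 1-s by linarith)) c0]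
    have h5 := mul_le_mul_of_nonneg_left h4 hPpos.le
    linarith [h5, hstep1]
  -- conclude P.len / m0 ≤ 24 * T
  have hmain : P.len / m0 ≤ 24 * T := by
    rw [div_le_iff₀ hm0pos]
    have e : (1-r^2)*(1-s^2)*T = A^2*(1+ρ^2) := by
      rw [hTdef, ← hB]; field_simp
    have hTineq : A^2 ≤ (1-r^2)*(1-s^2)*T := by
      rw [e]; linarith [mul_nonneg (sq_nonneg A) (sq_nonneg ρ)]
    have h2 : 24*A^2*m0 ≤ 24*T*m0*((1-r^2)*(1-s^2)) := by
      have h3 := mul_le_mul_of_nonneg_left hTineq (show (0:ℝ) ≤ 24*m0 by positivity)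
      linarith [h3]
    exact le_of_mul_le_mul_right (by linarith [hstep2, h2]) hBpos
  have hlogmain : Real.log (P.len / m0) ≤ Real.log (24 * T) :=
    Real.log_le_log (by positivity) hmain
  rw [Real.log_mul (by norm_num) (by positivity)] at hlogmain
  have hlog24 : Real.log 24 ≤ 23 := by
    have := Real.log_le_sub_one_of_pos (x := 24) (by norm_num)
    linarith
  rw [hβ]
  linarith
end

section
/- Kahane's martingale $K = (K_I)_{I \in \mathcal{D}}$, defined by $K_n(x) = \sum_{k=1}^n W_k(x)$ where $W_k(x) = 1$ if the $k$-th digit of the base-$4$ expansion of $x$ lies in $\{0,3\}$ and $W_k(x) = -1$ if it lies in $\{1,2\}$, is a Bloch martingale: there exists a constant (one may take $2$) bounding $|K_I - K_J|$ for every pair of adjacent dyadic intervals $I, J \subset [0,1]$ of the same length. -/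
noncomputable section

/-- The `k`-th base-4 digit of `x ∈ [0,1)`. -/
def qdig (k : ℕ) (x : ℝ) : ℤ := ⌊x * 4 ^ k⌋ % 4

/-- The increments of Kahane's martingale: `+1` for digits `0,3`, `-1` for digits `1,2`. -/
def kahW (k : ℕ) (x : ℝ) : ℤ := if qdig k x = 0 ∨ qdig k x = 3 then 1 else -1

/-- The value of Kahane's martingale on the dyadic interval of generation `m` containing
`x`: `K_I = ∑_{k=1}^{⌊m/2⌋} W_k(x)` (odd generations repeat the previous value). -/
def kahK (m : ℕ) (x : ℝ) : ℤ := ∑ k ∈ Finset.Icc 1 (m / 2), kahW k x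

namespace KahAux

/-- Combinatorial version of `kahW`. -/
def WJ (a : ℕ) : ℤ := if a % 4 = 0 ∨ a % 4 = 3 then 1 else -1

/-- Combinatorial version of `kahK`. -/
def KJ (m j : ℕ) : ℤ := ∑ k ∈ Finset.Icc 1 (m / 2), WJ (j / 2 ^ (m - 2 * k))

lemma floor_eq (m j k : ℕ) (hk : 2 * k ≤ m) {x : ℝ}
    (hx : x ∈ Set.Ico ((j : ℝ) / 2 ^ m) ((j + 1) / 2 ^ m)) :
    ⌊x * 4 ^ k⌋ = (j / 2 ^ (m - 2 * k) : ℕ) := by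
  obtain ⟨hx1, hx2⟩ := hx
  set e := m - 2 * k with he
  set q := j / 2 ^ e with hq
  have h2e : (0:ℝ) < 2 ^ e := by positivity
  have h4k : (0:ℝ) < 4 ^ k := by positivity
  have h2m : (0:ℝ) < 2 ^ m := by positivity
  have hpow : (2:ℝ) ^ m = 2 ^ e * 4 ^ k := by
    rw [show (4:ℝ) = 2 ^ 2 by norm_num, ← pow_mul, ← pow_add]
    congr 1; omega
  have hq1 : q * 2 ^ e ≤ j := Nat.div_mul_le_self _ _
  have hq2 : j + 1 ≤ (q + 1) * 2 ^ e := by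
    have h1 := Nat.div_add_mod j (2 ^ e)
    have h2 : j % 2 ^ e < 2 ^ e := Nat.mod_lt _ (by positivity)
    have : j < (q + 1) * 2 ^ e := by
      calc j = 2 ^ e * q + j % 2 ^ e := h1.symm
        _ < 2 ^ e * q + 2 ^ e := by omega
        _ = (q + 1) * 2 ^ e := by ring
    omega
  have key1 : (q:ℝ) ≤ x * 4 ^ k := by
    have ha : (q:ℝ) ≤ (j:ℝ) / 2 ^ e := by
      rw [le_div_iff₀ h2e]; exact_mod_cast hq1
    have hb : (j:ℝ) / 2 ^ e = (j:ℝ) / 2 ^ m * 4 ^ k := by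
      rw [hpow]; field_simp
    have hc : (j:ℝ) / 2 ^ m * 4 ^ k ≤ x * 4 ^ k :=
      mul_le_mul_of_nonneg_right hx1 (le_of_lt h4k)
    linarith
  have key2 : x * 4 ^ k < (q:ℝ) + 1 := by
    have ha : ((j:ℝ) + 1) / 2 ^ e ≤ (q:ℝ) + 1 := by
      rw [div_le_iff₀ h2e]
      have : ((j:ℝ) + 1) ≤ ((q:ℝ) + 1) * 2 ^ e := by exact_mod_cast hq2
      linarith
    have hb : ((j:ℝ) + 1) / 2 ^ e = ((j:ℝ) + 1) / 2 ^ m * 4 ^ k := by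
      rw [hpow]; field_simp
    have hc : x * 4 ^ k < ((j:ℝ) + 1) / 2 ^ m * 4 ^ k :=
      mul_lt_mul_of_pos_right hx2 h4k
    linarith
  rw [Int.floor_eq_iff]
  constructor
  · exact_mod_cast key1
  · push_cast; exact key2

lemma kahK_eq (m j : ℕ) {x : ℝ}
    (hx : x ∈ Set.Ico ((j : ℝ) / 2 ^ m) ((j + 1) / 2 ^ m)) :
    kahK m x = KJ m j := by
  unfold kahK KJ
  refine Finset.sum_congr rfl fun k hk => ?_
  rw [Finset.mem_Icc] at hk
  have h2k : 2 * k ≤ m := by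
    have := Nat.div_mul_le_self m 2
    omega
  have hf := floor_eq m j k h2k hx
  unfold kahW WJ qdig
  rw [hf]
  set a := j / 2 ^ (m - 2 * k) with ha
  by_cases h : a % 4 = 0 ∨ a % 4 = 3
  · rw [if_pos (by omega), if_pos h]
  · rw [if_neg (by omega), if_neg h]

lemma mem_self (m j : ℕ) :
    ((j:ℝ) / 2 ^ m) ∈ Set.Ico ((j : ℝ) / 2 ^ m) ((j + 1) / 2 ^ m) := by
  refine ⟨le_refl _, ?_⟩
  gcongr <;> linarith

lemma KJ_child (m j : ℕ) :
    KJ (m + 1) (2 * j) + KJ (m + 1) (2 * j + 1) = 2 * KJ m j := by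
  have hmain : ∀ k, 1 ≤ k → 2 * k ≤ m →
      (2 * j) / 2 ^ (m + 1 - 2 * k) = j / 2 ^ (m - 2 * k) ∧
      (2 * j + 1) / 2 ^ (m + 1 - 2 * k) = j / 2 ^ (m - 2 * k) := by
    intro k _ hk
    have he : m + 1 - 2 * k = (m - 2 * k) + 1 := by omega
    rw [he, pow_succ]
    constructor
    · rw [mul_comm (2 ^ (m - 2*k)) 2, ← Nat.div_div_eq_div_mul]
      congr 1
      omega
    · rw [mul_comm (2 ^ (m - 2*k)) 2, ← Nat.div_div_eq_div_mul]
      congr 1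
      omega
  rcases Nat.even_or_odd m with hm | hm
  · obtain ⟨t, ht⟩ := hm
    have h1 : (m + 1) / 2 = m / 2 := by omega
    unfold KJ
    rw [h1]
    have e1 : ∀ k ∈ Finset.Icc 1 (m / 2),
        WJ ((2 * j) / 2 ^ (m + 1 - 2 * k)) = WJ (j / 2 ^ (m - 2 * k)) := by
      intro k hk; rw [Finset.mem_Icc] at hk
      rw [(hmain k hk.1 (by omega)).1]
    have e2 : ∀ k ∈ Finset.Icc 1 (m / 2),
        WJ ((2 * j + 1) / 2 ^ (m + 1 - 2 * k)) = WJ (j / 2 ^ (m - 2 * k)) := by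
      intro k hk; rw [Finset.mem_Icc] at hk
      rw [(hmain k hk.1 (by omega)).2]
    rw [Finset.sum_congr rfl e1, Finset.sum_congr rfl e2]
    ring
  · obtain ⟨t, ht⟩ := hm
    have h1 : (m + 1) / 2 = t + 1 := by omega
    have h2 : m / 2 = t := by omega
    unfold KJ
    rw [h1, h2]
    rw [Finset.sum_Icc_succ_top (by omega : 1 ≤ t + 1),
        Finset.sum_Icc_succ_top (by omega : 1 ≤ t + 1)]
    have e1 : ∀ k ∈ Finset.Icc 1 t,
        WJ ((2 * j) / 2 ^ (m + 1 - 2 * k)) = WJ (j / 2 ^ (m - 2 * k)) := by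
      intro k hk; rw [Finset.mem_Icc] at hk
      rw [(hmain k hk.1 (by omega)).1]
    have e2 : ∀ k ∈ Finset.Icc 1 t,
        WJ ((2 * j + 1) / 2 ^ (m + 1 - 2 * k)) = WJ (j / 2 ^ (m - 2 * k)) := by
      intro k hk; rw [Finset.mem_Icc] at hk
      rw [(hmain k hk.1 (by omega)).2]
    rw [Finset.sum_congr rfl e1, Finset.sum_congr rfl e2]
    have hz : m + 1 - 2 * (t + 1) = 0 := by omega
    rw [hz]
    have hlast : WJ ((2 * j) / 2 ^ 0) + WJ ((2 * j + 1) / 2 ^ 0) = 0 := by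
      simp only [pow_zero, Nat.div_one]
      rcases Nat.even_or_odd j with hj | hj
      · obtain ⟨s, hs⟩ := hj
        have a1 : (2 * j) % 4 = 0 := by omega
        have a2 : (2 * j + 1) % 4 = 1 := by omega
        simp [WJ, a1, a2]
      · obtain ⟨s, hs⟩ := hj
        have a1 : (2 * j) % 4 = 2 := by omega
        have a2 : (2 * j + 1) % 4 = 3 := by omega
        simp [WJ, a1, a2]
    linarith [hlast]

lemma WJ_abs (j e : ℕ) :
    |WJ ((j + 1) / 2 ^ e) - WJ (j / 2 ^ e)| ≤
      if e = padicValNat 2 (j + 1) then 2 else 0 := by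
  haveI : Fact (Nat.Prime 2) := ⟨Nat.prime_two⟩
  set r := padicValNat 2 (j + 1) with hr
  have hnd : ¬ 2 ^ (r + 1) ∣ j + 1 :=
    pow_succ_padicValNat_not_dvd (Nat.succ_ne_zero j)
  rcases lt_trichotomy e r with h | h | h
  · -- e < r : W values are equal
    rw [if_neg (by omega)]
    have hdvd1 : 2 ^ (e + 1) ∣ j + 1 :=
      dvd_trans (pow_dvd_pow 2 (by omega)) pow_padicValNat_dvd
    have hdvd' : 2 ^ e ∣ j + 1 := dvd_trans (pow_dvd_pow 2 (by omega)) hdvd1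
    obtain ⟨c, hc⟩ := hdvd1
    have hb : (j + 1) / 2 ^ e = 2 * c := by
      rw [hc, pow_succ, show 2 ^ e * 2 * c = 2 ^ e * (2 * c) by ring]
      exact Nat.mul_div_cancel_left _ (by positivity)
    have hab : (j + 1) / 2 ^ e = j / 2 ^ e + 1 := Nat.succ_div_of_dvd hdvd'
    set a := j / 2 ^ e with ha
    have hc1 : 1 ≤ c := by
      rcases Nat.eq_zero_or_pos c with h0 | h0
      · simp [h0] at hc
      · exact h0
    have haodd : a % 2 = 1 := by omega
    have h14 : a % 4 = 1 ∨ a % 4 = 3 := by omega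
    rw [hab]
    rcases h14 with h4 | h4
    · have h5 : (a + 1) % 4 = 2 := by omega
      simp [WJ, h4, h5]
    · have h5 : (a + 1) % 4 = 0 := by omega
      simp [WJ, h4, h5]
  · -- e = r : W values differ by 2
    rw [if_pos h]
    have hdvd' : 2 ^ e ∣ j + 1 := by
      rw [h]; exact pow_padicValNat_dvd
    have hab : (j + 1) / 2 ^ e = j / 2 ^ e + 1 := Nat.succ_div_of_dvd hdvd'
    set a := j / 2 ^ e with ha
    have hbodd : ((j + 1) / 2 ^ e) % 2 = 1 := by
      by_contra hcon
      have h2d : 2 ∣ (j + 1) / 2 ^ e := by omega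
      obtain ⟨d, hd⟩ := h2d
      have hmul : (j + 1) / 2 ^ e * 2 ^ e = j + 1 := Nat.div_mul_cancel hdvd'
      have : 2 ^ (r + 1) ∣ j + 1 := by
        refine ⟨d, ?_⟩
        rw [← hmul, hd, pow_succ, ← h]
        ring
      exact hnd this
    have haev : a % 2 = 0 := by omega
    have h04 : a % 4 = 0 ∨ a % 4 = 2 := by omega
    rw [hab]
    rcases h04 with h4 | h4
    · have h5 : (a + 1) % 4 = 1 := by omega
      simp [WJ, h4, h5]
    · have h5 : (a + 1) % 4 = 3 := by omega
      simp [WJ, h4, h5]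
  · -- e > r : quotients are equal
    rw [if_neg (by omega)]
    have hnd' : ¬ 2 ^ e ∣ j + 1 := fun hdd =>
      hnd (dvd_trans (pow_dvd_pow 2 (by omega)) hdd)
    rw [Nat.succ_div_of_not_dvd hnd']
    simp

lemma KJ_adj (m j : ℕ) : |KJ m (j + 1) - KJ m j| ≤ 2 := by
  set r := padicValNat 2 (j + 1) with hr
  unfold KJ
  rw [← Finset.sum_sub_distrib]
  calc |∑ k ∈ Finset.Icc 1 (m / 2),
          (WJ ((j + 1) / 2 ^ (m - 2 * k)) - WJ (j / 2 ^ (m - 2 * k)))|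
      ≤ ∑ k ∈ Finset.Icc 1 (m / 2),
          |WJ ((j + 1) / 2 ^ (m - 2 * k)) - WJ (j / 2 ^ (m - 2 * k))| :=
        Finset.abs_sum_le_sum_abs _ _
    _ ≤ ∑ k ∈ Finset.Icc 1 (m / 2), (if m - 2 * k = r then (2:ℤ) else 0) :=
        Finset.sum_le_sum fun k _ => WJ_abs j (m - 2 * k)
    _ ≤ 2 := by
        rw [← Finset.sum_filter, Finset.sum_const, nsmul_eq_mul]
        have hcard :
            (Finset.filter (fun k => m - 2 * k = r) (Finset.Icc 1 (m / 2))).card ≤ 1 := by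
          apply Finset.card_le_one.mpr
          intro a ha b hb
          simp only [Finset.mem_filter, Finset.mem_Icc] at ha hb
          have h2a : 2 * a ≤ m := by
            have := Nat.div_mul_le_self m 2; omega
          have h2b : 2 * b ≤ m := by
            have := Nat.div_mul_le_self m 2; omega
          omega
        have : ((Finset.filter (fun k => m - 2 * k = r) (Finset.Icc 1 (m / 2))).card : ℤ) ≤ 1 := by
          exact_mod_cast hcard
        nlinarith

end KahAux

/-- Kahane's martingale is a dyadic martingale (constant on dyadic intervals,
with the averaging property) which is a Bloch martingale: `|K_I - K_J| ≤ 2` for every pair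
of adjacent dyadic intervals `I, J ⊂ [0,1]` of the same length. -/
theorem stmt_16 :
    -- constancy on dyadic intervals of generation `m`
    (∀ m j : ℕ, j < 2 ^ m → ∀ x y : ℝ,
        x ∈ Set.Ico ((j : ℝ) / 2 ^ m) ((j + 1) / 2 ^ m) →
        y ∈ Set.Ico ((j : ℝ) / 2 ^ m) ((j + 1) / 2 ^ m) → kahK m x = kahK m y) ∧
    -- dyadic martingale property
    (∀ m j : ℕ, j < 2 ^ m →
        2 * kahK m ((j : ℝ) / 2 ^ m) =
          kahK (m + 1) ((2 * j : ℝ) / 2 ^ (m + 1)) +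
            kahK (m + 1) ((2 * j + 1 : ℝ) / 2 ^ (m + 1))) ∧
    -- Bloch property: jumps between adjacent same-length dyadic intervals are at most 2
    (∀ m j : ℕ, j + 1 < 2 ^ m → ∀ x y : ℝ,
        x ∈ Set.Ico ((j : ℝ) / 2 ^ m) ((j + 1) / 2 ^ m) →
        y ∈ Set.Ico ((j + 1 : ℝ) / 2 ^ m) ((j + 2) / 2 ^ m) →
        |kahK m x - kahK m y| ≤ 2) := by
  refine ⟨?_, ?_, ?_⟩
  · intro m j _ x y hx hy
    rw [KahAux.kahK_eq m j hx, KahAux.kahK_eq m j hy]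
  · intro m j _
    have h0 : kahK m ((j:ℝ) / 2 ^ m) = KahAux.KJ m j :=
      KahAux.kahK_eq m j (KahAux.mem_self m j)
    have h1 : kahK (m + 1) ((2 * j : ℝ) / 2 ^ (m + 1)) = KahAux.KJ (m + 1) (2 * j) := by
      have := KahAux.kahK_eq (m + 1) (2 * j) (KahAux.mem_self (m + 1) (2 * j))
      rw [← this]
      norm_num
    have h2 : kahK (m + 1) ((2 * j + 1 : ℝ) / 2 ^ (m + 1)) =
        KahAux.KJ (m + 1) (2 * j + 1) := by
      have := KahAux.kahK_eq (m + 1) (2 * j + 1) (KahAux.mem_self (m + 1) (2 * j + 1))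
      rw [← this]
      norm_num
    rw [h0, h1, h2, KahAux.KJ_child]
  · intro m j _ x y hx hy
    have hx' : kahK m x = KahAux.KJ m j := KahAux.kahK_eq m j hx
    have hy' : kahK m y = KahAux.KJ m (j + 1) := by
      apply KahAux.kahK_eq m (j + 1)
      push_cast
      have h2 : ((j : ℝ) + 1 + 1) = (j : ℝ) + 2 := by ring
      rw [h2]
      exact hy
    rw [hx', hy', abs_sub_comm]
    exact KahAux.KJ_adj m j

end
end

section
/- Let $b$ be a holomorphic function on $\mathbb{D}$ with $\|b\|_{\mathcal{B}} \le 1$ and $b(0) = 0$, and let $Z = (z_n)$ be a sequence in $\mathbb{D}$ such that each dyadic top half $T(I)$, $I$ a dyadic arc, contains at most one point of $Z$, and $\sum_n (1-|z_n|^2) < \infty$. Suppose there exist constants $\gamma, C_0 > 0$ such that for every $k \ge 1$ and $\varepsilon > 0$, the number of dyadic arcs $J$ of generation $k$ with $|b_J - b_{\mathbb{T}}| > \varepsilon k$ is at most $C_0 2^k e^{-\gamma \varepsilon^2 k}$. Then for every $0 < \lambda < \gamma \log 2$, there exists $C > 0$ such that for all $t > 0$, $\#\{n : e^{\lambda |b(z_n)|^2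 / (-\log(1-|z_n|^2))}(1-|z_n|^2) > t\} \le C/t$. -/
open MeasureTheory ENNReal Classical

noncomputable section AuxStmt18

open Classical

/-- generation index of `z`: the unique `k` with `2^{-k-1} < 1 - ‖z‖ ≤ 2^{-k}`. -/
def auxKgen (z : ℂ) : ℕ := Nat.log 2 ⌊(1 - ‖z‖)⁻¹⌋₊

/-- normalized angle of `z` in `[0,1)`. -/
def auxT0 (z : ℂ) : ℝ := Int.fract (Complex.arg z / (2 * Real.pi))

/-- dyadic index of the arc of generation `auxKgen z` containing the angle of `z`. -/
def auxJ (z : ℂ) : ℕ := ⌊auxT0 z * 2 ^ auxKgen z⌋₊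

/-- the dyadic arc whose top half contains `z`. -/
def auxArc (z : ℂ) : Arc := ⟨(auxJ z : ℝ) / 2 ^ auxKgen z, 1 / 2 ^ auxKgen z⟩

lemma circlePoint_fract (x : ℝ) : circlePoint (Int.fract x) = circlePoint x := by
  unfold circlePoint
  have h : (2 * (Real.pi:ℂ) * (Int.fract x : ℝ) * Complex.I)
      = 2 * (Real.pi:ℂ) * (x:ℝ) * Complex.I + ((-⌊x⌋ : ℤ) : ℂ) * (2 * (Real.pi:ℂ) * Complex.I) := by
    rw [Int.fract]
    push_cast
    ring
  rw [h, Complex.exp_add, Complex.exp_int_mul_two_pi_mul_I]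
  ring

lemma circle_eq (w : ℂ) (h0 : w ≠ 0) : w / (‖w‖ : ℂ) = circlePoint (auxT0 w) := by
  rw [auxT0, circlePoint_fract]
  have habs : (‖w‖ : ℂ) * Complex.exp (w.arg * Complex.I) = w :=
    Complex.norm_mul_exp_arg_mul_I w
  have hne : (‖w‖ : ℂ) ≠ 0 := by
    simpa using norm_ne_zero_iff.mpr h0
  have hpiC : (Real.pi : ℂ) ≠ 0 := by
    exact_mod_cast Complex.ofReal_ne_zero.mpr Real.pi_ne_zero
  have harg : 2 * (Real.pi:ℂ) * ((w.arg / (2 * Real.pi) : ℝ) : ℂ) * Complex.I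
      = (w.arg : ℂ) * Complex.I := by
    push_cast
    field_simp
  rw [circlePoint, harg]
  rw [div_eq_iff hne, mul_comm]
  exact habs.symm

lemma aux_mem (z : ℂ) (h0 : z ≠ 0) (h1 : ‖z‖ < 1) :
    auxArc z ∈ gridArcs 0 ∧ z ∈ topHalfρ (1/2) (auxArc z) ∧ auxJ z < 2 ^ auxKgen z ∧
    (2:ℝ) ^ auxKgen z * (1 - ‖z‖) ≤ 1 ∧ 1 < (2:ℝ) ^ auxKgen z * (2 * (1 - ‖z‖)) := by
  have hr0 : 0 < ‖z‖ := norm_pos_iff.mpr h0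
  have h1r : 0 < 1 - ‖z‖ := by linarith
  have hx1 : 1 < (1 - ‖z‖)⁻¹ := (one_lt_inv₀ h1r).mpr (by linarith)
  set N := ⌊(1 - ‖z‖)⁻¹⌋₊ with hN
  have hN1 : 1 ≤ N := Nat.le_floor (by exact_mod_cast hx1.le)
  set k := auxKgen z with hk
  have h2k : (2:ℕ) ^ k ≤ N := Nat.pow_log_le_self 2 (by omega)
  have h2k' : N < 2 ^ (k + 1) := Nat.lt_pow_succ_log_self one_lt_two N
  have hklo : (2:ℝ) ^ k ≤ (1 - ‖z‖)⁻¹ := by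
    calc (2:ℝ) ^ k ≤ (N : ℝ) := by exact_mod_cast h2k
    _ ≤ (1 - ‖z‖)⁻¹ := Nat.floor_le (by positivity)
  have hkhi : (1 - ‖z‖)⁻¹ < (2:ℝ) ^ (k + 1) := by
    calc (1 - ‖z‖)⁻¹ < (N : ℝ) + 1 := Nat.lt_floor_add_one _
    _ ≤ (2:ℝ) ^ (k+1) := by exact_mod_cast h2k'
  have hb1 : (2:ℝ) ^ k * (1 - ‖z‖) ≤ 1 := by
    have := mul_le_mul_of_nonneg_right hklo h1r.le
    rwa [inv_mul_cancel₀ h1r.ne'] at this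
  have hb2 : 1 < (2:ℝ) ^ k * (2 * (1 - ‖z‖)) := by
    have := mul_lt_mul_of_pos_right hkhi h1r
    rw [inv_mul_cancel₀ h1r.ne'] at this
    calc (1:ℝ) < 2 ^ (k+1) * (1 - ‖z‖) := this
    _ = 2 ^ k * (2 * (1 - ‖z‖)) := by ring
  have ht00 : 0 ≤ auxT0 z := Int.fract_nonneg _
  have ht01 : auxT0 z < 1 := Int.fract_lt_one _
  have h2kpos : (0:ℝ) < 2 ^ k := by positivity
  have hj : auxJ z < 2 ^ k := by
    rw [auxJ, ← hk]
    rw [Nat.floor_lt (by positivity)]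
    push_cast
    calc auxT0 z * 2 ^ k < 1 * 2 ^ k := by
          exact mul_lt_mul_of_pos_right ht01 h2kpos
    _ = 2 ^ k := one_mul _
  have hjle : (auxJ z : ℝ) ≤ auxT0 z * 2 ^ k := Nat.floor_le (by positivity)
  have hjlt : auxT0 z * 2 ^ k < (auxJ z : ℝ) + 1 := Nat.lt_floor_add_one _
  have hmem : arcMem (auxArc z) (z / (‖z‖ : ℂ)) := by
    refine ⟨auxT0 z, ?_, ?_, circle_eq z h0⟩
    · show (auxJ z : ℝ) / 2 ^ k ≤ auxT0 z
      rw [div_le_iff₀ h2kpos]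
      exact hjle
    · show auxT0 z < (auxJ z : ℝ) / 2 ^ k + 1 / 2 ^ k
      have h2 : auxT0 z < ((auxJ z : ℝ) + 1) / 2 ^ k := by
        rw [lt_div_iff₀ h2kpos]; exact hjlt
      rw [add_div] at h2
      linarith
  refine ⟨⟨k, auxJ z, hj, by simp [auxArc, ← hk]⟩, ⟨h0, ?_, ?_, hmem⟩, hj, hb1, hb2⟩
  · show 1 - 1/2 < (1 - ‖z‖) / (1 / 2 ^ k)
    have hA : (1 - ‖z‖) / ((1:ℝ)/2^k) = (1-‖z‖)*2^k := by field_simp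
    rw [hA]; linarith
  · show (1 - ‖z‖) / (1 / 2 ^ k) ≤ 1
    have hA : (1 - ‖z‖) / ((1:ℝ)/2^k) = (1-‖z‖)*2^k := by field_simp
    rw [hA]; linarith

lemma aux_inj {z : ℕ → ℂ}
    (hsep : ∀ I ∈ gridArcs 0, ∀ n m : ℕ,
      z n ∈ topHalfρ (1/2) I → z m ∈ topHalfρ (1/2) I → n = m)
    {n m : ℕ} (hn0 : z n ≠ 0) (hm0 : z m ≠ 0) (hn1 : ‖z n‖ < 1) (hm1 : ‖z m‖ < 1)
    (hk : auxKgen (z n) = auxKgen (z m)) (hj : auxJ (z n) = auxJ (z m)) : n = m := by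
  have h1 := aux_mem (z n) hn0 hn1
  have h2 := aux_mem (z m) hm0 hm1
  have harc : auxArc (z n) = auxArc (z m) := by rw [auxArc, auxArc, hk, hj]
  exact hsep _ h1.1 n m h1.2.1 (harc ▸ h2.2.1)

lemma aux_geom (r : ℝ) (h0 : 0 ≤ r) (h1 : r < 1) (m₀ : ℕ) (S : Finset ℕ)
    (hS : ∀ i ∈ S, m₀ ≤ i) : ∑ i ∈ S, r ^ i ≤ r ^ m₀ / (1 - r) := by
  have hsum : Summable (fun i : ℕ => r ^ i) := summable_geometric_of_lt_one h0 h1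
  have h2 : ∑ i ∈ S, r ^ i = r ^ m₀ * ∑ i ∈ S, r ^ (i - m₀) := by
    rw [Finset.mul_sum]
    refine Finset.sum_congr rfl fun i hi => ?_
    rw [← pow_add, Nat.add_sub_cancel' (hS i hi)]
  have h3 : ∑ i ∈ S, r ^ (i - m₀) = ∑ j ∈ S.image (· - m₀), r ^ j :=
    (Finset.sum_image (fun a ha b hb hab => by
      have := hS a ha; have := hS b hb; omega)).symm
  have h4 : ∑ j ∈ S.image (· - m₀), r ^ j ≤ ∑' j : ℕ, r ^ j :=
    hsum.sum_le_tsum _ (fun i _ => pow_nonneg h0 i)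
  rw [h2, h3, div_eq_mul_inv]
  rw [tsum_geometric_of_lt_one h0 h1] at h4
  exact mul_le_mul_of_nonneg_left h4 (pow_nonneg h0 _)

lemma aux_sum_two (S : Finset ℕ) (Y : ℝ) (hY : 0 < Y) (h : ∀ k ∈ S, (2:ℝ) ^ k < Y) :
    ∑ k ∈ S, (2:ℝ) ^ k ≤ 2 * Y := by
  rcases S.eq_empty_or_nonempty with rfl | hne
  · simp; linarith
  · have hsub : S ⊆ Finset.range (S.max' hne + 1) := fun k hk =>
      Finset.mem_range.mpr (Nat.lt_succ_of_le (S.le_max' k hk))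
    have hm := h _ (S.max'_mem hne)
    calc ∑ k ∈ S, (2:ℝ) ^ k ≤ ∑ k ∈ Finset.range (S.max' hne + 1), (2:ℝ) ^ k :=
          Finset.sum_le_sum_of_subset_of_nonneg hsub (fun i _ _ => by positivity)
    _ = ((2:ℝ) ^ (S.max' hne + 1) - 1) / (2 - 1) := geom_sum_eq (by norm_num) _
    _ ≤ 2 * Y := by rw [pow_succ]; norm_num; nlinarith

lemma aux_poly1 (γ η X Q m2 u G lam kR w : ℝ)
    (hγ : 0 < γ) (hη0 : 0 < η) (hη1 : η < 1) (hX0 : 0 ≤ X) (hG : 0 < G) (hlam : 0 < lam)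
    (hk1 : 1 ≤ kR) (hηk : 1 ≤ η * kR)
    (hQ : lam * Q = (kR - 1) * G * X)
    (hu : lam * u = γ * (1 - η) ^ 2 * G)
    (hw : w = (1 - η) * Q - m2) (hm20 : 0 ≤ m2) :
    kR * (u * X) ≤ γ * w + kR * (γ * m2) := by
  have h1 : (1 - η) * kR ≤ kR - 1 := by nlinarith
  have h2 : (0:ℝ) ≤ γ * (1 - η) * G * X := by
    have hη1' : (0:ℝ) ≤ 1 - η := by linarith
    positivity
  have h3 : γ * (1 - η) * G * X * ((1 - η) * kR) ≤ γ * (1 - η) * G * X * (kR - 1) :=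
    mul_le_mul_of_nonneg_left h1 h2
  have e1 : lam * (kR * (u * X)) = kR * X * (γ * (1 - η) ^ 2 * G) := by
    calc lam * (kR * (u * X)) = kR * X * (lam * u) := by ring
    _ = kR * X * (γ * (1 - η) ^ 2 * G) := by rw [hu]
  have e2 : lam * (γ * w + kR * (γ * m2))
      = γ * (1 - η) * ((kR - 1) * G * X) + lam * γ * m2 * (kR - 1) := by
    calc lam * (γ * w + kR * (γ * m2))
        = γ * (1 - η) * (lam * Q) + lam * γ * m2 * (kR - 1) := by rw [hw]; ring
    _ = γ * (1 - η) * ((kR - 1) * G * X) + lam * γ * m2 * (kR - 1) := by rw [hQ]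
  have h4 : lam * (kR * (u * X)) ≤ lam * (γ * w + kR * (γ * m2)) := by
    rw [e1, e2]
    nlinarith [h3, mul_nonneg (mul_nonneg (mul_nonneg hlam.le hγ.le) hm20)
      (by linarith : (0:ℝ) ≤ kR - 1)]
  exact le_of_mul_le_mul_left h4 hlam

lemma aux_poly2 (η M B Q m2 w : ℝ) (hη0 : 0 < η) (hη1 : η < 1/2) (hM : 0 ≤ M) (hB : 0 ≤ B)
    (hQ0 : 0 ≤ Q) (hQB : Q < B ^ 2) (hm2eq : η * m2 = M ^ 2) (hm20 : 0 ≤ m2)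
    (hw : w = (1 - η) * Q - m2) (hwpos : 0 < w) : M < B ∧ w < (B - M) ^ 2 := by
  have hMB : M < B := by
    by_contra hc
    push_neg at hc
    have hB2M2 : B ^ 2 ≤ M ^ 2 := by nlinarith
    have hQm : Q < η * m2 := by rw [hm2eq]; linarith
    have h5 : (1 - η) * Q ≤ (1 - η) * (η * m2) :=
      mul_le_mul_of_nonneg_left hQm.le (by linarith)
    nlinarith [hm20, sq_nonneg (η - 1/2)]
  refine ⟨hMB, ?_⟩
  have h6 : (1 - η) * Q < (1 - η) * B ^ 2 :=
    mul_lt_mul_of_pos_left hQB (by linarith)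
  nlinarith [sq_nonneg (η * B - M), hm2eq, hη0]

lemma aux_delta1 (r : ℝ) (h0 : 0 ≤ r) (h1 : r < 1) : 0 < 1 - r ^ 2 := by nlinarith

lemma aux_delta2 (r p : ℝ) (h0 : 0 ≤ r) (h1 : r < 1) (hp : 0 < p)
    (hb : p * (1 - r) ≤ 1) : (1 - r ^ 2) * p ≤ 2 := by nlinarith

set_option maxHeartbeats 1000000 in
lemma aux_real (lam γ η M B D t δ X w u : ℝ) (k : ℕ)
    (hlam : 0 < lam) (hγ : 0 < γ) (hη0 : 0 < η) (hη2 : η < 1/2) (hM : 0 ≤ M)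
    (hk2 : 2 ≤ k) (hηk : 1 ≤ η * k)
    (hδ0 : 0 < δ) (hδ2 : δ * 2 ^ k ≤ 2)
    (hB : 0 ≤ B) (hBD : B - M ≤ D)
    (ht0 : 0 < t)
    (ht : t < Real.exp (lam * B ^ 2 / (-Real.log δ)) * δ)
    (hX : X = ((k : ℝ) - 1) * Real.log 2 + Real.log t) (hX0 : 0 ≤ X)
    (hw : w = (1 - η) * (((k : ℝ) - 1) * Real.log 2 * X / lam) - M ^ 2 / η)
    (hu : u = γ * (1 - η) ^ 2 * Real.log 2 / lam) :
    u * X - γ * M ^ 2 / η ≤ γ * w / k ∧ (0 < w → Real.sqrt w < D) := by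
  have hlog2 : (0:ℝ) < Real.log 2 := Real.log_pos one_lt_two
  have hkR : (2:ℝ) ≤ (k : ℝ) := by exact_mod_cast hk2
  have hkpos : (0:ℝ) < (k : ℝ) := by linarith
  have hL₀pos : 0 < ((k : ℝ) - 1) * Real.log 2 := mul_pos (by linarith) hlog2
  have hδle : δ ≤ 2 / 2 ^ k := by
    rw [le_div_iff₀ (by positivity : (0:ℝ) < 2 ^ k)]; exact hδ2
  have hLlb : ((k : ℝ) - 1) * Real.log 2 ≤ -Real.log δ := by
    have h1 : Real.log δ ≤ Real.log (2 / 2 ^ k) := Real.log_le_log hδ0 hδle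
    have h2 : Real.log ((2:ℝ) / 2 ^ k) = Real.log 2 - (k : ℝ) * Real.log 2 := by
      rw [Real.log_div two_ne_zero (by positivity), Real.log_pow]
    rw [h2] at h1
    linarith
  have hLpos : 0 < -Real.log δ := lt_of_lt_of_le hL₀pos hLlb
  have hexp : Real.log t + -Real.log δ < lam * B ^ 2 / (-Real.log δ) := by
    have h1 : t / δ < Real.exp (lam * B ^ 2 / (-Real.log δ)) := by
      rw [div_lt_iff₀ hδ0]; exact ht
    have h2 := (Real.log_lt_iff_lt_exp (div_pos ht0 hδ0)).mpr h1
    rw [Real.log_div ht0.ne' hδ0.ne'] at h2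
    linarith
  have hBB : ((k : ℝ) - 1) * Real.log 2 * X < lam * B ^ 2 := by
    have h1 : (Real.log t + -Real.log δ) * (-Real.log δ) < lam * B ^ 2 := by
      rw [← lt_div_iff₀ hLpos]; exact hexp
    nlinarith [mul_nonneg (sub_nonneg.mpr hLlb)
      (by rw [hX] at hX0 ⊢; linarith : (0:ℝ) ≤ X + -Real.log δ), hX]
  have hQeq : lam * (((k : ℝ) - 1) * Real.log 2 * X / lam) = ((k:ℝ) - 1) * Real.log 2 * X := by
    field_simp
  have hQ0 : (0:ℝ) ≤ ((k : ℝ) - 1) * Real.log 2 * X / lam := by positivity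
  have hQB : ((k : ℝ) - 1) * Real.log 2 * X / lam < B ^ 2 := by
    rw [div_lt_iff₀ hlam]; nlinarith [hBB]
  have hm2eq : η * (M ^ 2 / η) = M ^ 2 := by field_simp
  have hm20 : (0:ℝ) ≤ M ^ 2 / η := by positivity
  have hueq : lam * u = γ * (1 - η) ^ 2 * Real.log 2 := by rw [hu]; field_simp
  constructor
  · have hmain := aux_poly1 γ η X (((k : ℝ) - 1) * Real.log 2 * X / lam) (M ^ 2 / η) u
      (Real.log 2) lam (k : ℝ) w hγ hη0 (by linarith) hX0 hlog2 hlam (by linarith)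
      hηk hQeq hueq hw hm20
    have e : γ * M ^ 2 / η = γ * (M ^ 2 / η) := by ring
    rw [e, le_div_iff₀ hkpos]
    nlinarith [hmain]
  · intro hwpos
    have h := aux_poly2 η M B (((k : ℝ) - 1) * Real.log 2 * X / lam) (M ^ 2 / η) w
      hη0 hη2 hM hB hQ0 hQB hm2eq hm20 hw hwpos
    have := (Real.sqrt_lt' (by linarith [h.1] : 0 < B - M)).mpr h.2
    linarith

end AuxStmt18

set_option maxHeartbeats 3000000 in
/-- weak-type bound for the trace of a Bloch function on a Carleson sequence
meeting each dyadic top half at most once, assuming the Azuma–Hoeffding-type deviation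
bound for the associated dyadic martingale `(b_I)`. -/
theorem stmt_18 (b : ℂ → ℂ)
    (hb_diff : DifferentiableOn ℂ b unitDisc)
    (hb_norm : ∀ z ∈ unitDisc, ‖deriv b z‖ * (1 - ‖z‖ ^ 2) ≤ 1)
    (hb0 : b 0 = 0)
    (z : ℕ → ℂ) (hz : ∀ n, z n ∈ unitDisc)
    -- each dyadic top half contains at most one point of the sequence
    (hsep : ∀ I ∈ gridArcs 0, ∀ n m : ℕ,
      z n ∈ topHalfρ (1/2) I → z m ∈ topHalfρ (1/2) I → n = m)
    -- Carleson condition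
    (hcarl : Summable fun n => 1 - ‖z n‖ ^ 2)
    -- the martingale values `b_I`, close to the values of `b` on top halves
    (bI : Arc → ℂ) (CI : ℝ)
    (hbI : ∀ I ∈ gridArcs 0, ∀ w ∈ topHalfρ (1/2) I, ‖bI I - b w‖ ≤ CI)
    -- Azuma–Hoeffding deviation bound for the dyadic arcs of generation `k`
    (γ C₀ : ℝ) (hγ : 0 < γ) (hC₀ : 0 < C₀)
    (hdev : ∀ k : ℕ, 1 ≤ k → ∀ ε : ℝ, 0 < ε →
      (((Finset.range (2 ^ k)).filter fun j =>
          ε * (k : ℝ) < ‖bI ⟨(j : ℝ) / 2 ^ k, 1 / 2 ^ k⟩ - bI ⟨0, 1⟩‖).card : ℝ)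
        ≤ C₀ * 2 ^ k * Real.exp (-γ * ε ^ 2 * (k : ℝ)))
    (lam : ℝ) (hlam0 : 0 < lam) (hlam : lam < γ * Real.log 2) :
    ∃ C > (0 : ℝ), ∀ t > (0 : ℝ),
      {n : ℕ | t < Real.exp (lam * ‖b (z n)‖ ^ 2 /
          (-Real.log (1 - ‖z n‖ ^ 2))) * (1 - ‖z n‖ ^ 2)}.Finite ∧
      (Nat.card {n : ℕ | t < Real.exp (lam * ‖b (z n)‖ ^ 2 /
          (-Real.log (1 - ‖z n‖ ^ 2))) * (1 - ‖z n‖ ^ 2)} : ℝ) ≤ C / t := by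
  classical
  set f : ℕ → ℝ := fun n => Real.exp (lam * ‖b (z n)‖ ^ 2 /
      (-Real.log (1 - ‖z n‖ ^ 2))) * (1 - ‖z n‖ ^ 2) with hfdef
  have hlog2 : (0:ℝ) < Real.log 2 := Real.log_pos one_lt_two
  have hγlog2 : (0:ℝ) < γ * Real.log 2 := mul_pos hγ hlog2
  -- the constant σ < 1 and the parameters η, u, K, M, C₁, rr
  have hσ0 : 0 < lam / (γ * Real.log 2) := div_pos hlam0 hγlog2
  have hσ1 : lam / (γ * Real.log 2) < 1 := (div_lt_one hγlog2).mpr hlam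
  set η : ℝ := (1 - Real.sqrt (lam / (γ * Real.log 2))) / 2 with hηdef
  have hsq0 : 0 < Real.sqrt (lam / (γ * Real.log 2)) := Real.sqrt_pos.mpr hσ0
  have hsq1 : Real.sqrt (lam / (γ * Real.log 2)) < 1 := by
    have := Real.sqrt_lt_sqrt hσ0.le hσ1
    simpa using this
  have hη0 : 0 < η := by rw [hηdef]; linarith
  have hη2 : η < 1/2 := by rw [hηdef]; linarith
  set u : ℝ := γ * (1 - η) ^ 2 * Real.log 2 / lam with hudef
  have hu1 : 1 < u := by
    have h1 : Real.sqrt (lam / (γ * Real.log 2)) < 1 - η := by rw [hηdef]; linarith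
    have h2 : lam / (γ * Real.log 2) < (1 - η) ^ 2 := by
      have hs := Real.sq_sqrt hσ0.le
      nlinarith [hsq0]
    rw [hudef, lt_div_iff₀ hlam0]
    have h3 : lam = (lam / (γ * Real.log 2)) * (γ * Real.log 2) := by field_simp
    nlinarith [h2, hγlog2]
  set M : ℝ := 2 * CI + ‖b (1/4 : ℂ)‖ with hMdef
  -- membership facts for the root arc and the point 1/4
  have harc1 : (⟨0, 1⟩ : Arc) ∈ gridArcs 0 := ⟨0, 0, by norm_num, by norm_num⟩
  have hq4 : ((1:ℂ)/4) ≠ 0 := by norm_num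
  have hq4n : ‖(1/4 : ℂ)‖ = 1/4 := by
    rw [show ((1:ℂ)/4) = (((1:ℝ)/4 : ℝ) : ℂ) by norm_num, Complex.norm_real]
    norm_num
  have hw₀ : (1/4 : ℂ) ∈ topHalfρ (1/2) ⟨0, 1⟩ := by
    refine ⟨hq4, ?_, ?_, ?_⟩
    · show 1 - 1/2 < (1 - ‖(1/4:ℂ)‖) / (1:ℝ)
      rw [hq4n]; norm_num
    · show (1 - ‖(1/4:ℂ)‖) / (1:ℝ) ≤ 1
      rw [hq4n]; norm_num
    · refine ⟨0, le_refl _, by norm_num, ?_⟩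
      rw [hq4n]
      show ((1:ℂ)/4) / (((1:ℝ)/4 : ℝ) : ℂ) = circlePoint 0
      rw [circlePoint]
      norm_num
  have hCI : 0 ≤ CI := le_trans (norm_nonneg _) (hbI ⟨0,1⟩ harc1 _ hw₀)
  have hM0 : 0 ≤ M := by
    rw [hMdef]
    have := norm_nonneg (b (1/4:ℂ))
    linarith
  set K : ℕ := ⌈η⁻¹⌉₊ + 2 with hKdef
  set C₁ : ℝ := max C₀ 1 * Real.exp (γ * M ^ 2 / η) with hC₁def
  have hC₁pos : 0 < C₁ := mul_pos (lt_of_lt_of_le one_pos (le_max_right _ _)) (Real.exp_pos _)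
  set rr : ℝ := Real.exp (-(u - 1) * Real.log 2) with hrrdef
  have hrr0 : 0 < rr := Real.exp_pos _
  have hrr1 : rr < 1 := by
    rw [hrrdef, Real.exp_lt_one_iff]
    nlinarith [hlog2, hu1]
  have h1rr : 0 < 1 - rr := by linarith
  -- triangle inequality through the martingale values
  have habs4 : ∀ a₁ a₂ a₃ a₄ : ℂ, ‖a₁ + a₂ + a₃ - a₄‖
      ≤ ‖a₁‖ + ‖a₂‖ + ‖a₃‖ + ‖a₄‖ := by
    intro a₁ a₂ a₃ a₄
    have t3 : ‖a₁ + a₂ + a₃ - a₄‖ ≤ ‖a₁ + a₂ + a₃‖ + ‖a₄‖ := by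
      rw [sub_eq_add_neg]
      have := norm_add_le (a₁ + a₂ + a₃) (-a₄)
      rwa [norm_neg] at this
    have t1 := norm_add_le (a₁ + a₂) a₃
    have t2 := norm_add_le a₁ a₂
    linarith
  have htri : ∀ n : ℕ, z n ≠ 0 →
      ‖b (z n)‖ - M ≤ ‖bI (auxArc (z n)) - bI ⟨0,1⟩‖ := by
    intro n hn0
    obtain ⟨hgrid, htop, -⟩ := aux_mem (z n) hn0 (hz n)
    have h1 := hbI _ hgrid _ htop
    have h2 := hbI _ harc1 _ hw₀
    have h3 := habs4 (bI (auxArc (z n)) - bI ⟨0,1⟩) (bI ⟨0,1⟩ - b (1/4)) (b (1/4))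
      (bI (auxArc (z n)) - b (z n))
    have e : (bI (auxArc (z n)) - bI ⟨0,1⟩) + (bI ⟨0,1⟩ - b (1/4)) + b (1/4)
        - (bI (auxArc (z n)) - b (z n)) = b (z n) := by ring
    rw [e] at h3
    rw [hMdef]
    linarith
  -- the exceptional finite set
  have hE0fin : {n : ℕ | z n = 0}.Finite := by
    have h := hcarl.tendsto_atTop_zero.eventually_lt_const one_pos
    rw [Filter.eventually_atTop] at h
    obtain ⟨N, hN⟩ := h
    refine Set.Finite.subset (Set.finite_Iio N) ?_
    intro n hn
    by_contra hc
    simp only [Set.mem_Iio, not_lt] at hc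
    have := hN n (by simpa [Set.mem_Iio] using hc)
    rw [Set.mem_setOf_eq.mp hn] at this
    simp at this
  have hE1fin : {n : ℕ | z n ≠ 0 ∧ auxKgen (z n) < K}.Finite := by
    apply Set.Finite.of_finite_image (f := fun n => (auxKgen (z n), auxJ (z n)))
    · apply Set.Finite.subset ((Set.finite_Iio K).prod (Set.finite_Iio (2 ^ K)))
      rintro ⟨k, j⟩ ⟨n, ⟨hn0, hnK⟩, heq⟩
      rw [← heq]
      have hj := (aux_mem (z n) hn0 (hz n)).2.2.1
      have hle : (2:ℕ) ^ auxKgen (z n) ≤ 2 ^ K := Nat.pow_le_pow_right (by norm_num) hnK.le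
      exact Set.mem_prod.mpr ⟨hnK, lt_of_lt_of_le hj hle⟩
    · intro n hn m hm hnm
      rw [Prod.mk.injEq] at hnm
      exact aux_inj hsep hn.1 hm.1 (hz n) (hz m) hnm.1 hnm.2
  set E : Set ℕ := {n : ℕ | z n = 0} ∪ {n : ℕ | z n ≠ 0 ∧ auxKgen (z n) < K} with hEdef
  have hEfin : E.Finite := hE0fin.union hE1fin
  set Efin : Finset ℕ := hEfin.toFinset with hEfdef
  set V : ℝ := 1 + ∑ n ∈ Efin, |f n| with hVdef
  have hV1 : 1 ≤ V := by
    rw [hVdef]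
    have : (0:ℝ) ≤ ∑ n ∈ Efin, |f n| := Finset.sum_nonneg (fun i _ => abs_nonneg _)
    linarith
  set C : ℝ := Efin.card * V + 2 * C₁ / (1 - rr) + 4 + 1 with hCdef
  have hC0 : 0 < C := by
    have h1 : (0:ℝ) ≤ Efin.card * V := mul_nonneg (Nat.cast_nonneg _) (by linarith)
    have h2 : (0:ℝ) ≤ 2 * C₁ / (1 - rr) := by positivity
    rw [hCdef]; linarith
  refine ⟨C, hC0, ?_⟩
  intro t ht0
  -- the key counting bound for finite subsets
  have key : ∀ F : Finset ℕ, (∀ n ∈ F, t < f n) → (F.card : ℝ) ≤ C / t := by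
    intro F hF
    have hcast := Finset.card_filter_add_card_filter_not (s := F) (p := fun n => n ∈ E)
    set F1 := F.filter (fun n => n ∈ E) with hF1def
    set F2 := F.filter (fun n => ¬ n ∈ E) with hF2def
    -- bound for the exceptional part
    have hF1bound : (F1.card : ℝ) ≤ (Efin.card : ℝ) * V / t := by
      rcases le_or_gt V t with hVt | hVt
      · have hempty : F1 = ∅ := by
          rw [Finset.eq_empty_iff_forall_notMem]
          intro n hn
          rw [hF1def, Finset.mem_filter] at hn
          have hfn := hF n hn.1
          have hmem : n ∈ Efin := hEfin.mem_toFinset.mpr hn.2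
          have h5 : f n ≤ |f n| := le_abs_self _
          have h6 : |f n| ≤ ∑ m ∈ Efin, |f m| :=
            Finset.single_le_sum (f := fun m => |f m|) (fun i _ => abs_nonneg (f i)) hmem
          rw [hVdef] at hVt
          linarith
        rw [hempty]
        simp only [Finset.card_empty, Nat.cast_zero]
        apply div_nonneg _ ht0.le
        exact mul_nonneg (Nat.cast_nonneg _) (by linarith [hV1])
      · have h5 : F1 ⊆ Efin := by
          intro n hn
          rw [hF1def, Finset.mem_filter] at hn
          exact hEfin.mem_toFinset.mpr hn.2
        have h6 : (F1.card : ℝ) ≤ (Efin.card : ℝ) := by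
          exact_mod_cast Finset.card_le_card h5
        have h7 : (1:ℝ) ≤ V / t := (one_le_div ht0).mpr hVt.le
        calc (F1.card:ℝ) ≤ (Efin.card:ℝ) := h6
        _ = (Efin.card:ℝ) * 1 := by ring
        _ ≤ (Efin.card:ℝ) * (V/t) := mul_le_mul_of_nonneg_left h7 (Nat.cast_nonneg _)
        _ = (Efin.card:ℝ) * V / t := by ring
    -- properties of the non-exceptional part
    have hF2prop : ∀ n ∈ F2, z n ≠ 0 ∧ K ≤ auxKgen (z n) := by
      intro n hn
      rw [hF2def, Finset.mem_filter] at hn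
      have hne := hn.2
      rw [hEdef] at hne
      simp only [Set.mem_union, Set.mem_setOf_eq] at hne
      push_neg at hne
      exact ⟨hne.1, hne.2 hne.1⟩
    set img := F2.image (fun n => auxKgen (z n)) with himgdef
    have himgK : ∀ k ∈ img, K ≤ k := by
      intro k hk
      rw [himgdef, Finset.mem_image] at hk
      obtain ⟨n, hn, rfl⟩ := hk
      exact (hF2prop n hn).2
    have hfibcard : F2.card = ∑ k ∈ img, (F2.filter fun n => auxKgen (z n) = k).card :=
      Finset.card_eq_sum_card_fiberwise (fun n hn => Finset.mem_image_of_mem _ hn)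
    -- trivial fiber bound
    have htriv : ∀ k : ℕ, ((F2.filter fun n => auxKgen (z n) = k).card : ℝ) ≤ (2:ℝ)^k := by
      intro k
      have h5 : (F2.filter fun n => auxKgen (z n) = k).card ≤ (Finset.range (2^k)).card := by
        apply Finset.card_le_card_of_injOn (fun n => auxJ (z n))
        · intro n hn
          rw [Finset.mem_coe, Finset.mem_filter] at hn
          have hn0 := (hF2prop n hn.1).1
          have hjlt := (aux_mem (z n) hn0 (hz n)).2.2.1
          rw [hn.2] at hjlt
          exact Finset.mem_range.mpr hjlt
        · intro n hn m hm hnm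
          simp only [Finset.coe_filter, Set.mem_setOf_eq] at hn hm
          exact aux_inj hsep (hF2prop n hn.1).1 (hF2prop m hm.1).1 (hz n) (hz m)
            (hn.2.trans hm.2.symm) hnm
      rw [Finset.card_range] at h5
      exact_mod_cast h5
    -- per-point facts
    have hpern : ∀ k : ℕ, ∀ n ∈ F2.filter (fun n => auxKgen (z n) = k),
        0 < 1 - ‖z n‖^2 ∧ (1 - ‖z n‖^2) * 2^k ≤ 2 ∧ t < f n ∧
        ‖b (z n)‖ - M ≤ ‖bI (auxArc (z n)) - bI ⟨0,1⟩‖ := by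
      intro k n hn
      rw [Finset.mem_filter] at hn
      have hn0 := (hF2prop n hn.1).1
      have hzn1 : ‖z n‖ < 1 := hz n
      have hmem := aux_mem (z n) hn0 hzn1
      have hb1 := hmem.2.2.2.1
      rw [hn.2] at hb1
      have hzn0 : 0 ≤ ‖z n‖ := norm_nonneg _
      have hFmem : n ∈ F := Finset.mem_of_mem_filter n hn.1
      exact ⟨aux_delta1 _ hzn0 hzn1, aux_delta2 _ _ hzn0 hzn1 (by positivity) hb1,
        hF n hFmem, htri n hn0⟩
    -- main fiber bound
    have hmainfib : ∀ k ∈ img, 0 ≤ ((k:ℝ) - 1) * Real.log 2 + Real.log t →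
        ((F2.filter fun n => auxKgen (z n) = k).card : ℝ)
          ≤ C₁ * 2^k * Real.exp (-(u * (((k:ℝ) - 1) * Real.log 2 + Real.log t))) := by
      intro k hkimg hX0
      set X := ((k:ℝ) - 1) * Real.log 2 + Real.log t with hXdef
      set w := (1 - η) * (((k:ℝ) - 1) * Real.log 2 * X / lam) - M^2/η with hwdef
      have hkK := himgK k hkimg
      have hk2 : 2 ≤ k := le_trans (by rw [hKdef]; omega) hkK
      have hk1 : 1 ≤ k := by omega
      have hkpos : (0:ℝ) < (k:ℝ) := by
        have : (2:ℝ) ≤ (k:ℝ) := by exact_mod_cast hk2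
        linarith
      have hηk : 1 ≤ η * (k:ℝ) := by
        have h5 : (η⁻¹ : ℝ) ≤ (K:ℝ) := by
          rw [hKdef]; push_cast
          have := Nat.le_ceil (η⁻¹ : ℝ)
          linarith
        have h6 : (K:ℝ) ≤ (k:ℝ) := by exact_mod_cast hkK
        calc (1:ℝ) = η * η⁻¹ := (mul_inv_cancel₀ hη0.ne').symm
        _ ≤ η * k := mul_le_mul_of_nonneg_left (h5.trans h6) hη0.le
      have hRHS0 : 0 ≤ C₁ * 2^k * Real.exp (-(u * X)) := by positivity
      rcases (F2.filter fun n => auxKgen (z n) = k).eq_empty_or_nonempty with hemp | hne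
      · rw [hemp]
        simpa using hRHS0
      · obtain ⟨n₀, hn₀⟩ := hne
        have hp₀ := hpern k n₀ hn₀
        have hG := (aux_real lam γ η M (‖b (z n₀)‖)
          (‖bI (auxArc (z n₀)) - bI ⟨0,1⟩‖) t (1 - ‖z n₀‖^2) X w u k
          hlam0 hγ hη0 hη2 hM0 hk2 hηk hp₀.1 hp₀.2.1 (norm_nonneg _)
          hp₀.2.2.2 ht0 hp₀.2.2.1 hXdef hX0 hwdef hudef).1
        by_cases hw : 0 < w
        · -- deviation estimate
          set ε := Real.sqrt w / (k:ℝ) with hεdef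
          have hε : 0 < ε := div_pos (Real.sqrt_pos.mpr hw) hkpos
          have hεk : ε * (k:ℝ) = Real.sqrt w := div_mul_cancel₀ _ hkpos.ne'
          have hdevk := hdev k hk1 ε hε
          have hcount : ((F2.filter fun n => auxKgen (z n) = k).card : ℝ)
              ≤ (((Finset.range (2 ^ k)).filter fun j =>
                ε * (k : ℝ) < ‖bI ⟨(j : ℝ) / 2 ^ k, 1 / 2 ^ k⟩ - bI ⟨0, 1⟩‖).card : ℝ) := by
            have h5 : (F2.filter fun n => auxKgen (z n) = k).card
                ≤ ((Finset.range (2 ^ k)).filter fun j =>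
                  ε * (k : ℝ) < ‖bI ⟨(j : ℝ) / 2 ^ k, 1 / 2 ^ k⟩ - bI ⟨0, 1⟩‖).card := by
              apply Finset.card_le_card_of_injOn (fun n => ((auxJ (z n) : ℕ) : ℝ))
              · intro n hn
                have hp := hpern k n hn
                rw [Finset.mem_coe, Finset.mem_filter] at hn
                have hn0 := (hF2prop n hn.1).1
                have hjlt := (aux_mem (z n) hn0 (hz n)).2.2.1
                rw [hn.2] at hjlt
                have hD := (aux_real lam γ η M (‖b (z n)‖)
                  (‖bI (auxArc (z n)) - bI ⟨0,1⟩‖) t (1 - ‖z n‖^2) X w u k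
                  hlam0 hγ hη0 hη2 hM0 hk2 hηk hp.1 hp.2.1 (norm_nonneg _)
                  hp.2.2.2 ht0 hp.2.2.1 hXdef hX0 hwdef hudef).2 hw
                have harcn : auxArc (z n) = ⟨((auxJ (z n) : ℕ) : ℝ)/2^k, 1/2^k⟩ := by
                  rw [auxArc, hn.2]
                rw [harcn] at hD
                rw [Finset.mem_coe, Finset.mem_filter]
                refine ⟨by simpa using hjlt, ?_⟩
                rw [hεk]
                exact hD
              · intro n hn m hm hnm
                simp only [Finset.coe_filter, Set.mem_setOf_eq] at hn hm
                have hnm' : auxJ (z n) = auxJ (z m) := by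
                  exact_mod_cast (show ((auxJ (z n) : ℕ) : ℝ) = ((auxJ (z m) : ℕ) : ℝ) from hnm)
                exact aux_inj hsep (hF2prop n hn.1).1 (hF2prop m hm.1).1 (hz n) (hz m)
                  (hn.2.trans hm.2.symm) hnm'
            exact_mod_cast h5
          have hε2 : -γ * ε^2 * (k:ℝ) = -(γ * w / k) := by
            rw [hεdef, div_pow, Real.sq_sqrt hw.le]
            field_simp
          have hexpineq : -γ * ε^2 * (k:ℝ) ≤ γ * M^2/η - u * X := by
            rw [hε2]; linarith [hG]
          calc ((F2.filter fun n => auxKgen (z n) = k).card : ℝ)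
              ≤ C₀ * 2 ^ k * Real.exp (-γ * ε ^ 2 * (k:ℝ)) := le_trans hcount hdevk
          _ ≤ C₀ * 2 ^ k * Real.exp (γ * M^2/η - u * X) := by
              have h7 := Real.exp_le_exp.mpr hexpineq
              have h8 : (0:ℝ) ≤ C₀ * 2^k := by positivity
              exact mul_le_mul_of_nonneg_left h7 h8
          _ = C₀ * Real.exp (γ * M^2/η) * (2 ^ k * Real.exp (-(u * X))) := by
              rw [show γ * M^2/η - u * X = γ * M^2/η + -(u*X) by ring, Real.exp_add]
              ring
          _ ≤ max C₀ 1 * Real.exp (γ * M^2/η) * (2 ^ k * Real.exp (-(u * X))) := by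
              have h9 : C₀ * Real.exp (γ * M^2/η) ≤ max C₀ 1 * Real.exp (γ * M^2/η) :=
                mul_le_mul_of_nonneg_right (le_max_left _ _) (Real.exp_pos _).le
              exact mul_le_mul_of_nonneg_right h9 (by positivity)
          _ = C₁ * 2^k * Real.exp (-(u * X)) := by rw [hC₁def]; ring
        · push_neg at hw
          have h5 : u * X ≤ γ * M^2/η := by
            have h6 : γ * w / (k:ℝ) ≤ 0 :=
              div_nonpos_iff.mpr (Or.inr ⟨mul_nonpos_of_nonneg_of_nonpos hγ.le hw, hkpos.le⟩)
            linarith [hG]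
          have h7 : (1:ℝ) ≤ C₁ * Real.exp (-(u*X)) := by
            have h8 : Real.exp (γ*M^2/η) * Real.exp (-(u*X)) = Real.exp (γ*M^2/η - u*X) := by
              rw [← Real.exp_add]; ring_nf
            have h9 : (1:ℝ) ≤ Real.exp (γ*M^2/η - u*X) := Real.one_le_exp (by linarith)
            have h10 : (1:ℝ) * (Real.exp (γ*M^2/η) * Real.exp (-(u*X)))
                ≤ max C₀ 1 * (Real.exp (γ*M^2/η) * Real.exp (-(u*X))) :=
              mul_le_mul_of_nonneg_right (le_max_right C₀ 1) (by positivity)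
            rw [hC₁def]
            calc (1:ℝ) ≤ Real.exp (γ*M^2/η - u*X) := h9
            _ = 1 * (Real.exp (γ*M^2/η) * Real.exp (-(u*X))) := by rw [h8]; ring
            _ ≤ max C₀ 1 * (Real.exp (γ*M^2/η) * Real.exp (-(u*X))) := h10
            _ = max C₀ 1 * Real.exp (γ * M ^ 2 / η) * Real.exp (-(u*X)) := by ring
          calc ((F2.filter fun n => auxKgen (z n) = k).card : ℝ) ≤ (2:ℝ)^k := htriv k
          _ = (2:ℝ)^k * 1 := by ring
          _ ≤ (2:ℝ)^k * (C₁ * Real.exp (-(u*X))) :=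
              mul_le_mul_of_nonneg_left h7 (by positivity)
          _ = C₁ * 2^k * Real.exp (-(u*X)) := by ring
    -- conversion to geometric form
    have hconv : ∀ k : ℕ, 1 ≤ k →
        C₁ * 2^k * Real.exp (-(u * (((k:ℝ)-1)*Real.log 2 + Real.log t)))
          = 2 * C₁ * Real.exp (-(u * Real.log t)) * rr^(k-1) := by
      intro k hk1
      have hm : ((k-1 : ℕ):ℝ) = (k:ℝ) - 1 := by
        rw [Nat.cast_sub hk1]; norm_num
      have e1 : (2:ℝ)^k = 2 * Real.exp (((k-1:ℕ):ℝ) * Real.log 2) := by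
        rw [Real.exp_nat_mul, Real.exp_log two_pos]
        conv_lhs => rw [show k = (k-1) + 1 by omega]
        rw [pow_succ]
        ring
      have e2 : rr^(k-1) = Real.exp (((k-1:ℕ):ℝ) * (-(u - 1) * Real.log 2)) := by
        rw [hrrdef, ← Real.exp_nat_mul]
      rw [e1, e2]
      calc C₁ * (2 * Real.exp (((k-1:ℕ):ℝ) * Real.log 2))
            * Real.exp (-(u * (((k:ℝ)-1)*Real.log 2 + Real.log t)))
          = 2 * C₁ * (Real.exp (((k-1:ℕ):ℝ) * Real.log 2)
            * Real.exp (-(u * (((k:ℝ)-1)*Real.log 2 + Real.log t)))) := by ring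
      _ = 2 * C₁ * Real.exp (((k-1:ℕ):ℝ) * Real.log 2
            + -(u * (((k:ℝ)-1)*Real.log 2 + Real.log t))) := by rw [Real.exp_add]
      _ = 2 * C₁ * Real.exp (-(u * Real.log t) + ((k-1:ℕ):ℝ) * (-(u - 1) * Real.log 2)) := by
          congr 1
          rw [hm]
          ring
      _ = 2 * C₁ * (Real.exp (-(u * Real.log t)) * Real.exp (((k-1:ℕ):ℝ) * (-(u - 1) * Real.log 2))) := by
          rw [Real.exp_add]
      _ = 2 * C₁ * Real.exp (-(u * Real.log t)) * Real.exp (((k-1:ℕ):ℝ) * (-(u - 1) * Real.log 2)) := by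
          ring
    -- split the sum over generations
    have hsplitsum := Finset.sum_filter_add_sum_filter_not img
      (fun k : ℕ => 0 ≤ ((k:ℝ)-1)*Real.log 2 + Real.log t)
      (fun k : ℕ => ((F2.filter fun n => auxKgen (z n) = k).card : ℝ))
    set P := img.filter (fun k : ℕ => 0 ≤ ((k:ℝ)-1)*Real.log 2 + Real.log t) with hPdef
    set Nn := img.filter (fun k : ℕ => ¬ 0 ≤ ((k:ℝ)-1)*Real.log 2 + Real.log t) with hNdef
    set m₀ : ℕ := ⌈(-Real.log t)/Real.log 2⌉₊ with hm₀def
    have hPsum : ∑ k ∈ P, ((F2.filter fun n => auxKgen (z n) = k).card : ℝ)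
        ≤ 2 * C₁ / (1 - rr) / t := by
      have h1 : ∀ k ∈ P, ((F2.filter fun n => auxKgen (z n) = k).card : ℝ)
          ≤ 2 * C₁ * Real.exp (-(u * Real.log t)) * rr^(k-1) := by
        intro k hk
        rw [hPdef, Finset.mem_filter] at hk
        have hk1 : 1 ≤ k := le_trans (by rw [hKdef]; omega) (himgK k hk.1)
        rw [← hconv k hk1]
        exact hmainfib k hk.1 hk.2
      have h2 := Finset.sum_le_sum h1
      have h3 : ∑ k ∈ P, 2 * C₁ * Real.exp (-(u * Real.log t)) * rr^(k-1)
          = 2 * C₁ * Real.exp (-(u * Real.log t)) * ∑ k ∈ P, rr^(k-1) := by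
        rw [Finset.mul_sum]
      have h4 : ∑ k ∈ P, rr^(k-1) = ∑ j ∈ P.image (· - 1), rr^j := by
        rw [Finset.sum_image]
        intro a ha b hb hab
        rw [hPdef, Finset.mem_coe, Finset.mem_filter] at ha hb
        have ha1 : 1 ≤ a := le_trans (by rw [hKdef]; omega) (himgK a ha.1)
        have hb1 : 1 ≤ b := le_trans (by rw [hKdef]; omega) (himgK b hb.1)
        simp only at hab
        omega
      have h5 : ∀ j ∈ P.image (· - 1), m₀ ≤ j := by
        intro j hj
        rw [Finset.mem_image] at hj
        obtain ⟨k, hk, rfl⟩ := hj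
        rw [hPdef, Finset.mem_filter] at hk
        have hk1 : 1 ≤ k := le_trans (by rw [hKdef]; omega) (himgK k hk.1)
        have hX0 := hk.2
        rw [hm₀def]
        apply Nat.ceil_le.mpr
        rw [div_le_iff₀ hlog2]
        rw [Nat.cast_sub hk1]
        push_cast
        linarith
      have h6 := aux_geom rr hrr0.le hrr1 m₀ (P.image (· - 1)) h5
      have h7 : rr^m₀ ≤ Real.exp ((u-1) * Real.log t) := by
        have e3 : rr^m₀ = Real.exp ((m₀:ℝ) * (-(u-1)*Real.log 2)) := by
          rw [hrrdef, ← Real.exp_nat_mul]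
        have h8 : (-Real.log t)/Real.log 2 ≤ (m₀:ℝ) := Nat.le_ceil _
        have h9 : (m₀:ℝ) * (-(u-1)*Real.log 2) ≤ ((-Real.log t)/Real.log 2) * (-(u-1)*Real.log 2) :=
          mul_le_mul_of_nonpos_right h8 (by nlinarith [hu1, hlog2])
        have h10 : ((-Real.log t)/Real.log 2) * (-(u-1)*Real.log 2) = (u-1)*Real.log t := by
          field_simp
        rw [e3]
        rw [h10] at h9
        exact Real.exp_le_exp.mpr h9
      have hc0 : (0:ℝ) ≤ 2 * C₁ * Real.exp (-(u * Real.log t)) := by positivity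
      calc ∑ k ∈ P, ((F2.filter fun n => auxKgen (z n) = k).card : ℝ)
          ≤ 2 * C₁ * Real.exp (-(u * Real.log t)) * ∑ k ∈ P, rr^(k-1) := by
            rw [← h3]; exact h2
      _ ≤ 2 * C₁ * Real.exp (-(u * Real.log t)) * (rr^m₀ / (1 - rr)) := by
            apply mul_le_mul_of_nonneg_left _ hc0
            rw [h4]; exact h6
      _ ≤ 2 * C₁ * Real.exp (-(u * Real.log t)) * (Real.exp ((u-1) * Real.log t) / (1 - rr)) := by
            apply mul_le_mul_of_nonneg_left _ hc0
            gcongr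
      _ = 2 * C₁ / (1 - rr) * (Real.exp (-(u * Real.log t)) * Real.exp ((u-1) * Real.log t)) := by
            ring
      _ = 2 * C₁ / (1 - rr) * Real.exp (-Real.log t) := by
            rw [← Real.exp_add]
            congr 1
            ring
      _ = 2 * C₁ / (1 - rr) / t := by
            rw [Real.exp_neg, Real.exp_log ht0]
            ring
    have hNsum : ∑ k ∈ Nn, ((F2.filter fun n => auxKgen (z n) = k).card : ℝ) ≤ 4 / t := by
      have h1 : ∀ k ∈ Nn, ((F2.filter fun n => auxKgen (z n) = k).card : ℝ) ≤ (2:ℝ)^k :=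
        fun k _ => htriv k
      have h2 : ∀ k ∈ Nn, (2:ℝ)^k < 2/t := by
        intro k hk
        rw [hNdef, Finset.mem_filter] at hk
        have hXneg : ((k:ℝ)-1)*Real.log 2 + Real.log t < 0 := by
          have := hk.2
          push_neg at this
          exact this
        have hk1 : 1 ≤ k := le_trans (by rw [hKdef]; omega) (himgK k hk.1)
        have hm : ((k-1 : ℕ):ℝ) = (k:ℝ) - 1 := by
          rw [Nat.cast_sub hk1]; norm_num
        have e1 : (2:ℝ)^(k-1) = Real.exp (((k-1:ℕ):ℝ) * Real.log 2) := by
          rw [Real.exp_nat_mul, Real.exp_log two_pos]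
        have h3 : (2:ℝ)^(k-1) < Real.exp (-Real.log t) := by
          rw [e1]
          apply Real.exp_lt_exp.mpr
          rw [hm]
          linarith
        rw [Real.exp_neg, Real.exp_log ht0] at h3
        have e2 : (2:ℝ)^k = 2 * 2^(k-1) := by
          conv_lhs => rw [show k = (k-1) + 1 by omega]
          rw [pow_succ]
          ring
        rw [e2]
        rw [show (2:ℝ)/t = 2 * t⁻¹ by ring]
        linarith [h3]
      calc ∑ k ∈ Nn, ((F2.filter fun n => auxKgen (z n) = k).card : ℝ)
          ≤ ∑ k ∈ Nn, (2:ℝ)^k := Finset.sum_le_sum h1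
      _ ≤ 2 * (2/t) := aux_sum_two Nn (2/t) (by positivity) h2
      _ = 4 / t := by ring
    -- put everything together
    have hF2bound : (F2.card : ℝ) ≤ 2 * C₁ / (1 - rr) / t + 4 / t := by
      have h1 : (F2.card : ℝ) = ∑ k ∈ img, ((F2.filter fun n => auxKgen (z n) = k).card : ℝ) := by
        rw [hfibcard]
        push_cast
        rfl
      rw [h1, ← hsplitsum]
      linarith [hPsum, hNsum]
    have htotal : (F.card : ℝ) = (F1.card : ℝ) + (F2.card : ℝ) := by
      rw [← hcast]
      push_cast
      rfl
    rw [htotal]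
    have hfinal : (Efin.card : ℝ) * V / t + (2 * C₁ / (1 - rr) / t + 4 / t) ≤ C / t := by
      have e : (Efin.card:ℝ) * V / t + (2 * C₁ / (1 - rr) / t + 4 / t)
          = ((Efin.card:ℝ) * V + (2 * C₁ / (1 - rr) + 4)) / t := by ring
      rw [e, hCdef]
      exact (div_le_div_iff_of_pos_right ht0).mpr (by linarith)
    linarith [hF1bound, hF2bound, hfinal]

  have hfin : {n : ℕ | t < f n}.Finite := by
    by_contra hinf
    obtain ⟨F, hFsub, hFcard⟩ := Set.Infinite.exists_subset_card_eq hinf (⌊C / t⌋₊ + 1)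
    have h1 := key F (fun n hn => hFsub hn)
    rw [hFcard] at h1
    have h2 := Nat.lt_floor_add_one (C / t)
    push_cast at h1
    linarith
  refine ⟨hfin, ?_⟩
  have hcard : (Nat.card {n : ℕ | t < f n}) = hfin.toFinset.card := by
    rw [Nat.card_coe_set_eq, Set.ncard_eq_toFinset_card _ hfin]
  rw [hcard]
  exact key hfin.toFinset (fun n hn => hfin.mem_toFinset.mp hn)
end
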